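/- arXiv:2302.11896 — 5 statements merged into one kernel-verified Lean document; each statement's English description precedes it below -/
import Mathlib

section
/- (Γ-liminf inequality) Let ε_p > 0 be any family of parameters. If γ_p ∈ Π(μ,ν) converges weakly-star to γ ∈ Π(μ,ν) as p → ∞, then liminf_{p→∞} J_{p,ε_p}(γ_p) ≥ J_∞(γ), i.e. the liminf of (∫ c^p dγ_p + ε_p H(γ_p|μ⊗ν))^{1/p} is at least the γ-essential supremum of c. -/
open MeasureTheory ENNReal Filter
open scoped Classical

noncomputable section

/-- ℝ^d with its Euclidean structure. -/
abbrev Rd (d : ℕ) := EuclideanSpace ℝ (Fin d)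

/-- γ ∈ Π(μ,ν): γ has first marginal μ and second marginal ν. -/
def IsCoupling {E F : Type*} [MeasurableSpace E] [MeasurableSpace F]
    (γ : Measure (E × F)) (μ : Measure E) (ν : Measure F) : Prop :=
  γ.map Prod.fst = μ ∧ γ.map Prod.snd = ν

/-- Relative entropy H(γ|ρ) = ∫ log(dγ/dρ) dγ if γ ≪ ρ (and the integral exists), +∞ otherwise. -/
def relEntropy {E : Type*} [MeasurableSpace E] (γ ρ : Measure E) : ℝ≥0∞ :=
  if γ ≪ ρ ∧ Integrable (llr γ ρ) γ then ENNReal.ofReal (∫ z, llr γ ρ z ∂γ) else ∞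

/-- The entropic functional J_{p,ε}(γ) = (∫ c^p dγ + ε H(γ|μ⊗ν))^{1/p} on Π(μ,ν), +∞ outside. -/
def Jpe {d : ℕ} (c : Rd d × Rd d → ℝ) (μ ν : Measure (Rd d)) (p ε : ℝ)
    (γ : Measure (Rd d × Rd d)) : ℝ≥0∞ :=
  if IsCoupling γ μ ν then
    (∫⁻ z, ENNReal.ofReal (c z ^ p) ∂γ + ENNReal.ofReal ε * relEntropy γ (μ.prod ν)) ^ (1 / p)
  else ∞

/-- The supremal functional J_∞(γ) = γ-ess sup c on Π(μ,ν), +∞ outside. -/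
def Jinf {d : ℕ} (c : Rd d × Rd d → ℝ) (μ ν : Measure (Rd d))
    (γ : Measure (Rd d × Rd d)) : ℝ≥0∞ :=
  if IsCoupling γ μ ν then essSup (fun z => ENNReal.ofReal (c z)) γ else ∞

/-- Weak-star convergence of a family of (probability) measures, as the real parameter p → ∞. -/
def WeakStarTendsto {E : Type*} [MeasurableSpace E] [TopologicalSpace E]
    (γ : ℝ → Measure E) (γ₀ : Measure E) : Prop :=
  ∀ f : BoundedContinuousFunction E ℝ,
    Tendsto (fun p => ∫ z, f z ∂(γ p)) atTop (nhds (∫ z, f z ∂γ₀))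

/-- The support of a Borel measure: points all of whose neighborhoods have positive measure. -/
def msupport {E : Type*} [MeasurableSpace E] [TopologicalSpace E] (μ : Measure E) : Set E :=
  {x | ∀ U ∈ nhds x, μ U ≠ 0}

open Topology

/-! For r below the γ-essential supremum of c, the open set U = {c > r} has γ U > 0, so by the
portmanteau theorem γ_p U ≥ b > 0 for all large p. Chebyshev's inequality then bounds
J_{p,ε_p}(γ_p) ≥ (∫ c^p dγ_p)^{1/p} from below by r · b^{1/p}, which tends to r. -/

theorem ENNReal.tendsto_rpow_one_div_atTop {b : ℝ≥0∞} (h0 : b ≠ 0) (htop : b ≠ ∞) :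
    Tendsto (fun p : ℝ => b ^ (1 / p)) atTop (𝓝 1) := by
  lift b to NNReal using htop
  have hb : b ≠ 0 := by exact_mod_cast h0
  have hexp : Tendsto (fun p : ℝ => 1 / p) atTop (𝓝 0) := by
    simpa using tendsto_inv_atTop_zero
  have hnn := (tendsto_const_nhds (x := b)).nnrpow hexp (Or.inl hb)
  rw [NNReal.rpow_zero] at hnn
  refine (ENNReal.tendsto_coe.mpr hnn).congr fun p => ?_
  rw [ENNReal.coe_rpow_of_ne_zero hb]

theorem pos_measure_setOf_lt_of_lt_essSup {α : Type*} [MeasurableSpace α] {μ : Measure α}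
    {f : α → ℝ≥0∞} {a : ℝ≥0∞} (ha : a < essSup f μ) : 0 < μ {x | a < f x} := by
  refine pos_iff_ne_zero.mpr fun h => ha.not_ge (essSup_le_of_ae_le a ?_)
  rw [EventuallyLE, ae_iff]
  simpa only [not_le] using h

theorem WeakStarTendsto.le_liminf_measure_open {E : Type*} [MeasurableSpace E]
    [TopologicalSpace E] [OpensMeasurableSpace E] [HasOuterApproxClosed E]
    {γs : ℝ → Measure E} {γ : Measure E} [∀ p, IsProbabilityMeasure (γs p)]
    [IsProbabilityMeasure γ] (h : WeakStarTendsto γs γ) {U : Set E} (hU : IsOpen U) :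
    γ U ≤ liminf (fun p => γs p U) atTop :=
  ProbabilityMeasure.le_liminf_measure_open_of_tendsto
    (μs := fun p => ⟨γs p, inferInstance⟩) (μ := ⟨γ, inferInstance⟩)
    (ProbabilityMeasure.tendsto_iff_forall_integral_tendsto.mpr h) hU

theorem ofReal_mul_measure_rpow_le_lintegral_rpow {α : Type*} [MeasurableSpace α]
    (ρ : Measure α) {c : α → ℝ} {U : Set α} (hU : MeasurableSet U) {t p : ℝ} (ht : 0 ≤ t)
    (hp : 0 < p) (htc : ∀ z ∈ U, t ≤ c z) :
    ENNReal.ofReal t * ρ U ^ (1 / p) ≤ (∫⁻ z, ENNReal.ofReal (c z ^ p) ∂ρ) ^ (1 / p) := by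
  have hmarkov : ENNReal.ofReal (t ^ p) * ρ U ≤ ∫⁻ z, ENNReal.ofReal (c z ^ p) ∂ρ :=
    calc ENNReal.ofReal (t ^ p) * ρ U = ∫⁻ _ in U, ENNReal.ofReal (t ^ p) ∂ρ := by
          rw [setLIntegral_const, mul_comm]
      _ ≤ ∫⁻ z in U, ENNReal.ofReal (c z ^ p) ∂ρ := setLIntegral_mono' hU fun z hz =>
          ENNReal.ofReal_le_ofReal (Real.rpow_le_rpow ht (htc z hz) hp.le)
      _ ≤ ∫⁻ z, ENNReal.ofReal (c z ^ p) ∂ρ := setLIntegral_le_lintegral _ _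
  calc ENNReal.ofReal t * ρ U ^ (1 / p) = (ENNReal.ofReal (t ^ p) * ρ U) ^ (1 / p) := by
        rw [ENNReal.mul_rpow_of_nonneg _ _ (by positivity),
          ← ENNReal.ofReal_rpow_of_nonneg ht hp.le, ← ENNReal.rpow_mul, mul_one_div_cancel hp.ne',
          ENNReal.rpow_one]
    _ ≤ _ := ENNReal.rpow_le_rpow hmarkov (by positivity)

theorem lintegral_rpow_le_Jpe {d : ℕ} (c : Rd d × Rd d → ℝ) {μ ν : Measure (Rd d)} {p : ℝ}
    (ε : ℝ) {γ : Measure (Rd d × Rd d)} (hγ : IsCoupling γ μ ν) (hp : 0 < p) :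
    (∫⁻ z, ENNReal.ofReal (c z ^ p) ∂γ) ^ (1 / p) ≤ Jpe c μ ν p ε γ := by
  rw [Jpe, if_pos hγ]
  exact ENNReal.rpow_le_rpow le_self_add (by positivity)

theorem ofReal_le_liminf_Jpe {d : ℕ} (c : Rd d × Rd d → ℝ) {μ ν : Measure (Rd d)}
    (ε : ℝ → ℝ) {γs : ℝ → Measure (Rd d × Rd d)} (hγs : ∀ p, IsCoupling (γs p) μ ν)
    {U : Set (Rd d × Rd d)} (hU : MeasurableSet U) {t : ℝ} (ht : 0 ≤ t)
    (htc : ∀ z ∈ U, t ≤ c z) (hγsU : 0 < liminf (fun p => γs p U) atTop) :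
    ENNReal.ofReal t ≤ liminf (fun p => Jpe c μ ν p (ε p) (γs p)) atTop := by
  obtain ⟨b, hb0, hbU⟩ := exists_between hγsU
  have hlower : ∀ᶠ p in atTop, ENNReal.ofReal t * b ^ (1 / p) ≤ Jpe c μ ν p (ε p) (γs p) := by
    filter_upwards [eventually_lt_of_lt_liminf hbU, eventually_gt_atTop 0] with p hbp hp
    calc ENNReal.ofReal t * b ^ (1 / p) ≤ ENNReal.ofReal t * γs p U ^ (1 / p) := by
          gcongr
      _ ≤ _ := ofReal_mul_measure_rpow_le_lintegral_rpow _ hU ht hp htc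
      _ ≤ _ := lintegral_rpow_le_Jpe c (ε p) (hγs p) hp
  have hlim : Tendsto (fun p : ℝ => ENNReal.ofReal t * b ^ (1 / p)) atTop
      (𝓝 (ENNReal.ofReal t)) := by
    simpa using ENNReal.Tendsto.const_mul
      (ENNReal.tendsto_rpow_one_div_atTop hb0.ne' (ne_top_of_lt hbU)) (Or.inr ofReal_ne_top)
  exact hlim.liminf_eq.symm.trans_le (liminf_le_liminf hlower)

theorem gamma_liminf_general {d : ℕ} (c : Rd d × Rd d → ℝ) (hc : Continuous c)
    (μ ν : Measure (Rd d))
    (ε : ℝ → ℝ)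
    (γseq : ℝ → Measure (Rd d × Rd d)) (hγseqP : ∀ p, IsProbabilityMeasure (γseq p))
    (hγseqC : ∀ p, IsCoupling (γseq p) μ ν)
    (γ : Measure (Rd d × Rd d)) (hγP : IsProbabilityMeasure γ) (hγC : IsCoupling γ μ ν)
    (hconv : WeakStarTendsto γseq γ) :
    Jinf c μ ν γ ≤ Filter.liminf (fun p => Jpe c μ ν p (ε p) (γseq p)) atTop := by
  rw [Jinf, if_pos hγC]
  refine le_of_forall_lt_imp_le_of_dense fun r hr => ?_
  have hr_top : r ≠ ∞ := ne_top_of_lt hr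
  set U := {z | r.toReal < c z}
  have hU : IsOpen U := isOpen_lt continuous_const hc
  have hγU : 0 < γ U := by
    simpa only [lt_ofReal_iff_toReal_lt hr_top] using pos_measure_setOf_lt_of_lt_essSup hr
  rw [← ofReal_toReal hr_top]
  exact ofReal_le_liminf_Jpe c ε hγseqC hU.measurableSet toReal_nonneg (fun z hz => le_of_lt hz)
    (hγU.trans_le (hconv.le_liminf_measure_open hU))

/-- (Γ-liminf inequality) If γ_p ∈ Π(μ,ν) converges weakly-star to γ ∈ Π(μ,ν), then
    liminf_{p→∞} J_{p,ε_p}(γ_p) ≥ J_∞(γ), for any parameters ε_p > 0. -/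
theorem gamma_liminf {d : ℕ} (c : Rd d × Rd d → ℝ) (hc : Continuous c) (hc0 : ∀ z, 0 ≤ c z)
    (μ ν : Measure (Rd d)) [IsProbabilityMeasure μ] [IsProbabilityMeasure ν]
    (hμ : IsCompact (msupport μ)) (hν : IsCompact (msupport ν))
    (ε : ℝ → ℝ) (hε : ∀ p, 0 < ε p)
    (γseq : ℝ → Measure (Rd d × Rd d)) (hγseqP : ∀ p, IsProbabilityMeasure (γseq p))
    (hγseqC : ∀ p, IsCoupling (γseq p) μ ν)
    (γ : Measure (Rd d × Rd d)) (hγP : IsProbabilityMeasure γ) (hγC : IsCoupling γ μ ν)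
    (hconv : WeakStarTendsto γseq γ) :
    Jinf c μ ν γ ≤ Filter.liminf (fun p => Jpe c μ ν p (ε p) (γseq p)) atTop :=
  gamma_liminf_general c hc μ ν ε γseq hγseqP hγseqC γ hγP hγC hconv
end
end

section
/- (Γ-limsup inequality, general case) Suppose ε_p > 0 satisfies ε_p^{1/p} → 0 as p → ∞. Then for every γ ∈ Π(μ,ν) there exists a sequence γ_p ∈ Π(μ,ν) converging weakly-star to γ such that limsup_{p→∞} J_{p,ε_p}(γ_p) ≤ J_∞(γ). -/
open MeasureTheory ENNReal Filter
open scoped Classical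

noncomputable section

open ProbabilityTheory Topology

/-!
Cut the compact supports of `μ` and `ν` into finitely many Borel cells of diameter `< η`, and on
each product cell replace `γ` by `μ ⊗ ν` conditioned on that cell, keeping the mass `γ` gives to
it. The result is again a coupling; its density with respect to `μ ⊗ ν` takes finitely many
values, so its entropy is finite; and it gives every cell the same mass as `γ`, so integrals of a
test function, and the essential supremum of `c`, move by at most their oscillation at scale `η`.
Letting `η → 0` slowly enough in `p` that `(ε_p H)^{1/p} → 0`, and bounding `(∫ c^p)^{1/p}` by
the essential supremum, gives the recovery family.
-/

theorem msupport_eq_support {E : Type*} [MeasurableSpace E] [TopologicalSpace E]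
    (μ : Measure E) : msupport μ = μ.support := by
  ext x
  simp [msupport, Measure.mem_support_iff_forall, pos_iff_ne_zero]

theorem ae_mem_msupport {E : Type*} [MeasurableSpace E] [TopologicalSpace E]
    [HereditarilyLindelofSpace E] (μ : Measure E) : ∀ᵐ x ∂μ, x ∈ msupport μ :=
  msupport_eq_support μ ▸ Measure.support_mem_ae

section Coupling

variable {X Y : Type*} [MeasurableSpace X] [MeasurableSpace Y] {γ : Measure (X × Y)}
  {μ : Measure X} {ν : Measure Y}

theorem IsCoupling.isProbabilityMeasure [IsProbabilityMeasure μ] (h : IsCoupling γ μ ν) :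
    IsProbabilityMeasure γ :=
  have : IsProbabilityMeasure (γ.map Prod.fst) := h.1 ▸ inferInstance
  Measure.isProbabilityMeasure_of_map Prod.fst

theorem IsCoupling.ae_mem_prod (h : IsCoupling γ μ ν) {K : Set X} {L : Set Y}
    (hK : ∀ᵐ x ∂μ, x ∈ K) (hL : ∀ᵐ y ∂ν, y ∈ L) : ∀ᵐ z ∂γ, z ∈ K ×ˢ L := by
  rw [← h.1] at hK
  rw [← h.2] at hL
  filter_upwards [ae_of_ae_map measurable_fst.aemeasurable hK,
    ae_of_ae_map measurable_snd.aemeasurable hL] with z hzK hzL using ⟨hzK, hzL⟩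

end Coupling

theorem UniformContinuousOn.eventually_dist_le {Z β : Type*} [PseudoMetricSpace Z]
    [PseudoMetricSpace β] {S : Set Z} {g : Z → β} (hg : UniformContinuousOn g S)
    {ι : ℕ → Type*} {Φ : ∀ k, Z → ι k} {δ : ℕ → ℝ} (hδ : Tendsto δ atTop (𝓝 0))
    (hΦ : ∀ k, ∀ z ∈ S, ∀ z' ∈ S, Φ k z = Φ k z' → dist z z' < δ k) {τ : ℝ} (hτ : 0 < τ) :
    ∀ᶠ k in atTop, ∀ z ∈ S, ∀ z' ∈ S, Φ k z = Φ k z' → dist (g z) (g z') ≤ τ := by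
  obtain ⟨η, hη, hgη⟩ := Metric.uniformContinuousOn_iff.1 hg τ hτ
  filter_upwards [hδ.eventually (gt_mem_nhds hη)] with k hk z hz z' hz' hzz'
  exact (hgη z hz z' hz' ((hΦ k z hz z' hz' hzz').trans hk)).le

theorem IsCompact.exists_measurable_fin_fibers_dist_lt {X : Type*} [PseudoMetricSpace X]
    [MeasurableSpace X] [OpensMeasurableSpace X] [TopologicalSpace.SeparableSpace X] {K : Set X}
    (hK : IsCompact K) {η : ℝ} (hη : 0 < η) :
    ∃ (n : ℕ) (π : X → Fin n), Measurable π ∧ ∀ x ∈ K, ∀ y ∈ K, π x = π y → dist x y < η := by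
  rcases K.eq_empty_or_nonempty with rfl | ⟨x₀, -⟩
  · exact ⟨1, fun _ => 0, measurable_const, by simp⟩
  have : Nonempty X := ⟨x₀⟩
  set e := TopologicalSpace.denseSeq X
  have hcover : K ⊆ ⋃ k, Metric.ball (e k) (η / 2) := fun x _ => by
    obtain ⟨k, hk⟩ := (TopologicalSpace.denseRange_denseSeq X).exists_dist_lt x (half_pos hη)
    exact Set.mem_iUnion.2 ⟨k, Metric.mem_ball.2 hk⟩
  obtain ⟨s, hs⟩ := hK.elim_finite_subcover _ (fun _ => Metric.isOpen_ball) hcover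
  set N := s.sup id
  set ind := SimpleFunc.nearestPtInd e N
  have hnear : ∀ x ∈ K, dist (e (ind x)) x < η / 2 := fun x hx => by
    obtain ⟨k, hk, hxk⟩ := Set.mem_iUnion₂.1 (hs hx)
    have := SimpleFunc.edist_nearestPt_le e x (Finset.le_sup (f := id) hk)
    rw [SimpleFunc.nearestPt, SimpleFunc.map_apply, edist_dist, edist_dist] at this
    exact ((ENNReal.ofReal_le_ofReal_iff dist_nonneg).1 this).trans_lt (Metric.mem_ball'.1 hxk)
  refine ⟨N + 1, fun x => Fin.ofNat (N + 1) (ind x),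
    (measurable_of_countable (Fin.ofNat (N + 1))).comp ind.measurable, fun x hx y hy hxy => ?_⟩
  have hind : ind x = ind y := by
    have := congrArg Fin.val hxy
    rwa [Fin.val_ofNat, Fin.val_ofNat,
      Nat.mod_eq_of_lt (Nat.lt_succ_of_le (SimpleFunc.nearestPtInd_le e N x)),
      Nat.mod_eq_of_lt (Nat.lt_succ_of_le (SimpleFunc.nearestPtInd_le e N y))] at this
  calc dist x y ≤ dist (e (ind x)) x + dist (e (ind y)) y := by
        rw [hind, dist_comm (e _) x]; exact dist_triangle _ _ _
    _ < η / 2 + η / 2 := add_lt_add (hnear x hx) (hnear y hy)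
    _ = η := add_halves η

section Cells

variable {Z ι : Type*} [MeasurableSpace Z] [MeasurableSpace ι] [Countable ι]
  [MeasurableSingletonClass ι] {Φ : Z → ι} {γ γ' : Measure Z} {S : Set Z} {τ : ℝ}

theorem ae_comp_of_map_eq (hΦ : Measurable Φ) (hmap : γ'.map Φ = γ.map Φ) {P : ι → Prop}
    (h : ∀ᵐ z ∂γ, P (Φ z)) : ∀ᵐ z ∂γ', P (Φ z) := by
  have hP : MeasurableSet {i | P i} := (Set.to_countable _).measurableSet
  rw [← ae_map_iff hΦ.aemeasurable hP, hmap, ae_map_iff hΦ.aemeasurable hP]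
  exact h

theorem essSup_le_essSup_add_of_map_eq {g : Z → ℝ} (hΦ : Measurable Φ)
    (hmap : γ'.map Φ = γ.map Φ) (hS : ∀ᵐ z ∂γ, z ∈ S) (hS' : ∀ᵐ z ∂γ', z ∈ S)
    (hg : ∀ z ∈ S, ∀ z' ∈ S, Φ z = Φ z' → dist (g z) (g z') ≤ τ) :
    essSup (fun z => ENNReal.ofReal (g z)) γ' ≤
      essSup (fun z => ENNReal.ofReal (g z)) γ + ENNReal.ofReal τ := by
  set E := essSup (fun z => ENNReal.ofReal (g z)) γ
  have hgood : ∀ᵐ z ∂γ', ∃ z' ∈ S, Φ z' = Φ z ∧ ENNReal.ofReal (g z') ≤ E := by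
    refine ae_comp_of_map_eq (P := fun i => ∃ z' ∈ S, Φ z' = i ∧ ENNReal.ofReal (g z') ≤ E)
      hΦ hmap ?_
    filter_upwards [hS, ENNReal.ae_le_essSup fun z => ENNReal.ofReal (g z)] with z hz hzE
    exact ⟨z, hz, rfl, hzE⟩
  refine essSup_le_of_ae_le _ ?_
  filter_upwards [hS', hgood] with z hz hz'
  obtain ⟨z', hz', hΦz, hz'E⟩ := hz'
  have hclose := hg z hz z' hz' hΦz.symm
  rw [Real.dist_eq, abs_le] at hclose
  calc ENNReal.ofReal (g z) ≤ ENNReal.ofReal (g z' + τ) :=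
        ENNReal.ofReal_le_ofReal (by linarith [hclose.2])
    _ ≤ E + ENNReal.ofReal τ := ENNReal.ofReal_add_le.trans (add_le_add_left hz'E _)

theorem abs_integral_sub_le_of_map_eq [Finite ι] [IsFiniteMeasure γ] [IsFiniteMeasure γ']
    {f : Z → ℝ} (hΦ : Measurable Φ) (hmap : γ'.map Φ = γ.map Φ) (hS : ∀ᵐ z ∂γ, z ∈ S)
    (hS' : ∀ᵐ z ∂γ', z ∈ S) (hfγ : Integrable f γ) (hfγ' : Integrable f γ')
    (hf : ∀ z ∈ S, ∀ z' ∈ S, Φ z = Φ z' → dist (f z) (f z') ≤ τ) :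
    |∫ z, f z ∂γ' - ∫ z, f z ∂γ| ≤ 2 * τ * γ.real Set.univ := by
  -- `F ∘ Φ` is constant on cells and is `τ`-close to `f` on `S`; it integrates equally under both
  let F : ι → ℝ := fun i => if h : ∃ z ∈ S, Φ z = i then f h.choose else 0
  have hF : ∀ z ∈ S, ‖f z - F (Φ z)‖ ≤ τ := fun z hz => by
    have h : ∃ z' ∈ S, Φ z' = Φ z := ⟨z, hz, rfl⟩
    rw [← dist_eq_norm]
    simpa only [F, dif_pos h] using hf z hz _ h.choose_spec.1 h.choose_spec.2.symm
  obtain ⟨C, hC⟩ := Finite.exists_le fun i => ‖F i‖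
  have hFΦ : Measurable (F ∘ Φ) := (measurable_of_countable F).comp hΦ
  have hclose : ∀ (ρ : Measure Z) [IsFiniteMeasure ρ], (∀ᵐ z ∂ρ, z ∈ S) → Integrable f ρ →
      |∫ z, f z ∂ρ - ∫ z, F (Φ z) ∂ρ| ≤ τ * ρ.real Set.univ := fun ρ _ hρS hfρ => by
    have hFρ : Integrable (fun z => F (Φ z)) ρ :=
      .of_bound hFΦ.aestronglyMeasurable C (ae_of_all _ (hC <| Φ ·))
    rw [← integral_sub hfρ hFρ]
    exact norm_integral_le_of_norm_le_const (by filter_upwards [hρS] with z hz using hF z hz)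
  have hsame : ∫ z, F (Φ z) ∂γ' = ∫ z, F (Φ z) ∂γ := by
    rw [← integral_map hΦ.aemeasurable (measurable_of_countable F).aestronglyMeasurable, hmap,
      integral_map hΦ.aemeasurable (measurable_of_countable F).aestronglyMeasurable]
  have hmass : γ'.real Set.univ = γ.real Set.univ := by
    simp only [measureReal_def, ← Set.preimage_univ (f := Φ),
      ← Measure.map_apply hΦ MeasurableSet.univ, hmap]
  calc |∫ z, f z ∂γ' - ∫ z, f z ∂γ|
      ≤ |∫ z, f z ∂γ' - ∫ z, F (Φ z) ∂γ'| + |∫ z, f z ∂γ - ∫ z, F (Φ z) ∂γ| := by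
        rw [hsame, abs_sub_comm (∫ z, f z ∂γ)]
        exact abs_sub_le _ _ _
    _ ≤ τ * γ'.real Set.univ + τ * γ.real Set.univ :=
        add_le_add (hclose γ' hS' hfγ') (hclose γ hS hfγ)
    _ = 2 * τ * γ.real Set.univ := by rw [hmass]; ring

end Cells

theorem integrable_llr_of_rnDeriv_eq_comp {Z ι : Type*} [MeasurableSpace Z] [Finite ι]
    {γ ρ : Measure Z} [IsFiniteMeasure γ] {Φ : Z → ι} {F : ι → ℝ≥0∞}
    (h : γ.rnDeriv ρ =ᵐ[γ] F ∘ Φ) : Integrable (llr γ ρ) γ := by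
  obtain ⟨C, hC⟩ := Finite.exists_le fun i => |Real.log (F i).toReal|
  refine Integrable.of_bound (measurable_llr γ ρ).aestronglyMeasurable C ?_
  filter_upwards [h] with z hz
  simpa [llr, hz] using hC (Φ z)

section BlockApprox

variable {Z ι : Type*} [MeasurableSpace Z] [Fintype ι] [MeasurableSpace ι]
  [DiscreteMeasurableSpace ι]

theorem withDensity_comp_eq_sum {Φ : Z → ι} (hΦ : Measurable Φ) (ρ : Measure Z)
    (F : ι → ℝ≥0∞) : ρ.withDensity (F ∘ Φ) = ∑ i, F i • ρ.restrict (Φ ⁻¹' {i}) := by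
  ext s hs
  rw [withDensity_apply _ hs, Function.comp_def, ← lintegral_map (measurable_of_countable F) hΦ,
    lintegral_fintype, Measure.coe_finsetSum, Finset.sum_apply]
  refine Finset.sum_congr rfl fun i _ => ?_
  rw [Measure.map_apply hΦ (.singleton i), Measure.smul_apply, smul_eq_mul,
    Measure.restrict_apply hs, Measure.restrict_apply (hΦ (.singleton i)), Set.inter_comm]

theorem map_withDensity_comp {Φ : Z → ι} (hΦ : Measurable Φ) (ρ : Measure Z) (F : ι → ℝ≥0∞) :
    (ρ.withDensity (F ∘ Φ)).map Φ = (ρ.map Φ).withDensity F := by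
  refine Measure.ext_of_singleton fun i => ?_
  rw [Measure.map_apply hΦ (.singleton i), withDensity_apply _ (hΦ (.singleton i)),
    withDensity_apply _ (.singleton i), lintegral_singleton, Measure.map_apply hΦ (.singleton i),
    setLIntegral_congr_fun (hΦ (.singleton i)) (g := fun _ => F i) fun z hz => by simp_all,
    setLIntegral_const]

def blockApprox (Φ : Z → ι) (γ ρ : Measure Z) : Measure Z :=
  ∑ i, γ (Φ ⁻¹' {i}) • ρ[|Φ ⁻¹' {i}]

variable {Φ : Z → ι} {γ ρ : Measure Z}

theorem blockApprox_eq_withDensity (hΦ : Measurable Φ) (γ ρ : Measure Z) :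
    blockApprox Φ γ ρ = ρ.withDensity ((fun i => γ (Φ ⁻¹' {i}) / ρ (Φ ⁻¹' {i})) ∘ Φ) := by
  rw [withDensity_comp_eq_sum hΦ]
  refine Finset.sum_congr rfl fun i _ => ?_
  rw [ProbabilityTheory.cond, smul_smul, div_eq_mul_inv]

theorem map_blockApprox [IsFiniteMeasure ρ] (hΦ : Measurable Φ)
    (hγρ : ∀ i, ρ (Φ ⁻¹' {i}) = 0 → γ (Φ ⁻¹' {i}) = 0) :
    (blockApprox Φ γ ρ).map Φ = γ.map Φ := by
  rw [blockApprox_eq_withDensity hΦ, map_withDensity_comp hΦ]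
  refine Measure.ext_of_singleton fun i => ?_
  rw [withDensity_apply _ (.singleton i), lintegral_singleton, Measure.map_apply hΦ (.singleton i),
    Measure.map_apply hΦ (.singleton i)]
  rcases eq_or_ne (ρ (Φ ⁻¹' {i})) 0 with h | h
  · simp [h, hγρ i h]
  · exact ENNReal.div_mul_cancel h (measure_ne_top _ _)

instance [IsFiniteMeasure γ] : IsFiniteMeasure (blockApprox Φ γ ρ) where
  measure_univ_lt_top := by
    simp only [blockApprox, Measure.coe_finsetSum, Finset.sum_apply, Measure.smul_apply,
      smul_eq_mul]
    exact ENNReal.sum_lt_top.2 fun i _ => ENNReal.mul_lt_top (measure_lt_top _ _)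
      (measure_lt_top _ _)

theorem relEntropy_blockApprox_ne_top [IsFiniteMeasure γ] [IsFiniteMeasure ρ]
    (hΦ : Measurable Φ) : relEntropy (blockApprox Φ γ ρ) ρ ≠ ∞ := by
  have hγ' := blockApprox_eq_withDensity hΦ γ ρ
  have hac : blockApprox Φ γ ρ ≪ ρ := hγ' ▸ withDensity_absolutelyContinuous _ _
  have hrn : (blockApprox Φ γ ρ).rnDeriv ρ =ᵐ[ρ] _ :=
    hγ' ▸ Measure.rnDeriv_withDensity ρ ((measurable_of_countable _).comp hΦ)
  rw [relEntropy, if_pos ⟨hac, integrable_llr_of_rnDeriv_eq_comp (hac.ae_le hrn)⟩]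
  exact ENNReal.ofReal_ne_top

end BlockApprox

theorem cond_prod_cond {X Y : Type*} [MeasurableSpace X] [MeasurableSpace Y] {μ : Measure X}
    {ν : Measure Y} [IsFiniteMeasure μ] [IsFiniteMeasure ν] (s : Set X) (t : Set Y) :
    (μ[|s]).prod (ν[|t]) = (μ.prod ν)[|s ×ˢ t] := by
  rw [ProbabilityTheory.cond, ProbabilityTheory.cond, ProbabilityTheory.cond,
    Measure.prod_smul_left, Measure.prod_smul_right, Measure.prod_restrict, smul_smul,
    Measure.prod_prod, ENNReal.mul_inv (.inr (measure_ne_top _ _)) (.inl (measure_ne_top _ _)),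
    mul_comm]

theorem mul_cond_univ {Y : Type*} [MeasurableSpace Y] {ν : Measure Y} [IsFiniteMeasure ν]
    {t : Set Y} {c : ℝ≥0∞} (hc : c ≤ ν t) : c * ν[|t] Set.univ = c := by
  rcases eq_or_ne (ν t) 0 with h | h
  · simp [le_antisymm (h ▸ hc) zero_le]
  · have := cond_isProbabilityMeasure (μ := ν) h
    rw [measure_univ, mul_one]

theorem sum_measure_inter_preimage_singleton {Z κ : Type*} [MeasurableSpace Z] [Fintype κ]
    [MeasurableSpace κ] [MeasurableSingletonClass κ] (ρ : Measure Z) {g : Z → κ}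
    (hg : Measurable g) (S : Set Z) : ∑ j, ρ (S ∩ g ⁻¹' {j}) = ρ S := by
  simpa [Measure.restrict_apply (hg (.singleton _)), Set.inter_comm] using
    sum_measure_preimage_singleton (μ := ρ.restrict S) Finset.univ fun j _ => hg (.singleton j)

theorem measure_prod_le_map_fst {X Y : Type*} [MeasurableSpace X] [MeasurableSpace Y]
    (γ : Measure (X × Y)) {s : Set X} (hs : MeasurableSet s) (t : Set Y) :
    γ (s ×ˢ t) ≤ γ.map Prod.fst s := by
  rw [Measure.map_apply measurable_fst hs]
  exact measure_mono fun z hz => hz.1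

theorem measure_prod_le_map_snd {X Y : Type*} [MeasurableSpace X] [MeasurableSpace Y]
    (γ : Measure (X × Y)) (s : Set X) {t : Set Y} (ht : MeasurableSet t) :
    γ (s ×ˢ t) ≤ γ.map Prod.snd t := by
  rw [Measure.map_apply measurable_snd ht]
  exact measure_mono fun z hz => hz.2

theorem preimage_prodMap_singleton {X Y ι κ : Type*} (π₁ : X → ι) (π₂ : Y → κ) (ij : ι × κ) :
    Prod.map π₁ π₂ ⁻¹' {ij} = (π₁ ⁻¹' {ij.1}) ×ˢ (π₂ ⁻¹' {ij.2}) := by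
  ext; simp [Prod.ext_iff]

section Product

variable {X Y ι κ : Type*} [MeasurableSpace X] [MeasurableSpace Y]
  [Fintype ι] [MeasurableSpace ι] [DiscreteMeasurableSpace ι]
  [Fintype κ] [MeasurableSpace κ] [DiscreteMeasurableSpace κ]
  {π₁ : X → ι} {π₂ : Y → κ} (γ : Measure (X × Y)) [IsFiniteMeasure γ]

theorem map_fst_blockApprox (hπ₁ : Measurable π₁) (hπ₂ : Measurable π₂) :
    (blockApprox (Prod.map π₁ π₂) γ ((γ.map Prod.fst).prod (γ.map Prod.snd))).map Prod.fst =
      γ.map Prod.fst := by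
  have hrow : ∀ i, ∑ j, γ (Prod.map π₁ π₂ ⁻¹' {(i, j)}) = γ.map Prod.fst (π₁ ⁻¹' {i}) :=
    fun i => by
      rw [Measure.map_apply measurable_fst (hπ₁ (.singleton _)),
        ← sum_measure_inter_preimage_singleton γ (hπ₂.comp measurable_snd)]
      exact Finset.sum_congr rfl fun j _ => congrArg γ (by ext; simp [Prod.ext_iff])
  rw [blockApprox, Measure.map_finset_sum' measurable_fst.aemeasurable]
  simp_rw [Measure.map_smul, preimage_prodMap_singleton, ← cond_prod_cond, Measure.map_fst_prod,
    smul_smul, mul_cond_univ (measure_prod_le_map_snd γ _ (hπ₂ (.singleton _))),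
    ← preimage_prodMap_singleton]
  rw [Fintype.sum_prod_type]
  simp_rw [← Finset.sum_smul, hrow]
  exact sum_meas_smul_cond_fiber hπ₁ _

theorem map_snd_blockApprox (hπ₁ : Measurable π₁) (hπ₂ : Measurable π₂) :
    (blockApprox (Prod.map π₁ π₂) γ ((γ.map Prod.fst).prod (γ.map Prod.snd))).map Prod.snd =
      γ.map Prod.snd := by
  have hcol : ∀ j, ∑ i, γ (Prod.map π₁ π₂ ⁻¹' {(i, j)}) = γ.map Prod.snd (π₂ ⁻¹' {j}) :=
    fun j => by
      rw [Measure.map_apply measurable_snd (hπ₂ (.singleton _)),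
        ← sum_measure_inter_preimage_singleton γ (hπ₁.comp measurable_fst)]
      exact Finset.sum_congr rfl fun i _ => congrArg γ (by ext; simp [Prod.ext_iff, and_comm])
  rw [blockApprox, Measure.map_finset_sum' measurable_snd.aemeasurable]
  simp_rw [Measure.map_smul, preimage_prodMap_singleton, ← cond_prod_cond, Measure.map_snd_prod,
    smul_smul, mul_cond_univ (measure_prod_le_map_fst γ (hπ₁ (.singleton _)) _),
    ← preimage_prodMap_singleton]
  rw [Fintype.sum_prod_type_right]
  simp_rw [← Finset.sum_smul, hcol]
  exact sum_meas_smul_cond_fiber hπ₂ _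

theorem isCoupling_blockApprox (hπ₁ : Measurable π₁) (hπ₂ : Measurable π₂) :
    IsCoupling (blockApprox (Prod.map π₁ π₂) γ ((γ.map Prod.fst).prod (γ.map Prod.snd)))
      (γ.map Prod.fst) (γ.map Prod.snd) :=
  ⟨map_fst_blockApprox γ hπ₁ hπ₂, map_snd_blockApprox γ hπ₁ hπ₂⟩

theorem map_prodMap_blockApprox (hπ₁ : Measurable π₁) (hπ₂ : Measurable π₂) :
    (blockApprox (Prod.map π₁ π₂) γ ((γ.map Prod.fst).prod (γ.map Prod.snd))).map
      (Prod.map π₁ π₂) = γ.map (Prod.map π₁ π₂) := by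
  refine map_blockApprox (hπ₁.prodMap hπ₂) fun ij h => ?_
  rw [preimage_prodMap_singleton, Measure.prod_prod, mul_eq_zero] at h
  rw [preimage_prodMap_singleton, ← nonpos_iff_eq_zero]
  rcases h with h | h
  · exact h ▸ measure_prod_le_map_fst γ (hπ₁ (.singleton _)) _
  · exact h ▸ measure_prod_le_map_snd γ _ (hπ₂ (.singleton _))

end Product

theorem exists_couplings_relEntropy_ne_top_tendsto {X Y : Type*} [PseudoMetricSpace X]
    [MeasurableSpace X] [OpensMeasurableSpace X] [SecondCountableTopology X] [PseudoMetricSpace Y]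
    [MeasurableSpace Y] [OpensMeasurableSpace Y] [SecondCountableTopology Y]
    {μ : Measure X} {ν : Measure Y} {K : Set X} {L : Set Y} (hK : IsCompact K) (hL : IsCompact L)
    (hμK : ∀ᵐ x ∂μ, x ∈ K) (hνL : ∀ᵐ y ∂ν, y ∈ L) {γ : Measure (X × Y)} [IsProbabilityMeasure γ]
    (hγ : IsCoupling γ μ ν) :
    ∃ γs : ℕ → Measure (X × Y),
      (∀ k, IsCoupling (γs k) μ ν ∧ relEntropy (γs k) (μ.prod ν) ≠ ∞) ∧
      (∀ f : BoundedContinuousFunction (X × Y) ℝ,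
        Tendsto (fun k => ∫ z, f z ∂γs k) atTop (𝓝 (∫ z, f z ∂γ))) ∧
      ∀ g : X × Y → ℝ, Continuous g → ∀ τ : ℝ, 0 < τ → ∀ᶠ k in atTop,
        essSup (fun z => ENNReal.ofReal (g z)) (γs k) ≤
          essSup (fun z => ENNReal.ofReal (g z)) γ + ENNReal.ofReal τ := by
  obtain ⟨rfl, rfl⟩ := hγ
  choose n₁ π₁ hπ₁ hπ₁K using fun k : ℕ =>
    hK.exists_measurable_fin_fibers_dist_lt (Nat.one_div_pos_of_nat (n := k))
  choose n₂ π₂ hπ₂ hπ₂L using fun k : ℕ =>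
    hL.exists_measurable_fin_fibers_dist_lt (Nat.one_div_pos_of_nat (n := k))
  have hΦ : ∀ k, Measurable (Prod.map (π₁ k) (π₂ k)) := fun k => (hπ₁ k).prodMap (hπ₂ k)
  set γs := fun k =>
    blockApprox (Prod.map (π₁ k) (π₂ k)) γ ((γ.map Prod.fst).prod (γ.map Prod.snd))
  have hγs : ∀ k, IsCoupling (γs k) (γ.map Prod.fst) (γ.map Prod.snd) := fun k =>
    isCoupling_blockApprox γ (hπ₁ k) (hπ₂ k)
  have hmap : ∀ k, (γs k).map (Prod.map (π₁ k) (π₂ k)) = γ.map (Prod.map (π₁ k) (π₂ k)) :=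
    fun k => map_prodMap_blockApprox γ (hπ₁ k) (hπ₂ k)
  have hS : ∀ᵐ z ∂γ, z ∈ K ×ˢ L := IsCoupling.ae_mem_prod ⟨rfl, rfl⟩ hμK hνL
  have hSk : ∀ k, ∀ᵐ z ∂γs k, z ∈ K ×ˢ L := fun k => (hγs k).ae_mem_prod hμK hνL
  have hfine : ∀ k, ∀ z ∈ K ×ˢ L, ∀ z' ∈ K ×ˢ L,
      Prod.map (π₁ k) (π₂ k) z = Prod.map (π₁ k) (π₂ k) z' → dist z z' < 1 / ((k : ℝ) + 1) := by
    rintro k ⟨x, y⟩ ⟨hx, hy⟩ ⟨x', y'⟩ ⟨hx', hy'⟩ h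
    simp only [Prod.map, Prod.ext_iff] at h
    exact max_lt (hπ₁K k x hx x' hx' h.1) (hπ₂L k y hy y' hy' h.2)
  have hunif : ∀ g : X × Y → ℝ, Continuous g → ∀ τ : ℝ, 0 < τ → ∀ᶠ k in atTop,
      ∀ z ∈ K ×ˢ L, ∀ z' ∈ K ×ˢ L,
        Prod.map (π₁ k) (π₂ k) z = Prod.map (π₁ k) (π₂ k) z' → dist (g z) (g z') ≤ τ :=
    fun g hg τ hτ => ((hK.prod hL).uniformContinuousOn_of_continuous hg.continuousOn
      ).eventually_dist_le tendsto_one_div_add_atTop_nhds_zero_nat hfine hτ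
  refine ⟨γs, fun k => ⟨hγs k, relEntropy_blockApprox_ne_top (hΦ k)⟩, fun f => ?_,
    fun g hg τ hτ => ?_⟩
  · refine Metric.tendsto_nhds.2 fun δ hδ => ?_
    filter_upwards [hunif f f.continuous (δ / 4) (by positivity)] with k hk
    calc dist (∫ z, f z ∂γs k) (∫ z, f z ∂γ) ≤ 2 * (δ / 4) * γ.real Set.univ :=
          abs_integral_sub_le_of_map_eq (hΦ k) (hmap k) hS (hSk k) (f.integrable _)
            (f.integrable _) hk
      _ < δ := by rw [probReal_univ]; linarith
  · filter_upwards [hunif g hg τ hτ] with k hk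
    exact essSup_le_essSup_add_of_map_eq (hΦ k) (hmap k) hS (hSk k) hk

theorem tendsto_ofReal_mul_rpow_one_div {ε : ℝ → ℝ} (hε : ∀ p, 0 ≤ ε p)
    (hε0 : Tendsto (fun p => ε p ^ (1 / p)) atTop (𝓝 0)) {H : ℝ≥0∞} (hH : H ≠ ∞) :
    Tendsto (fun p => (ENNReal.ofReal (ε p) * H) ^ (1 / p)) atTop (𝓝 0) := by
  have hlim : Tendsto (fun p => ENNReal.ofReal (ε p ^ (1 / p)) * max H 1) atTop (𝓝 0) := by
    simpa using ENNReal.Tendsto.mul_const (ENNReal.tendsto_ofReal hε0)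
      (.inr (max_ne_top hH one_ne_top))
  refine tendsto_of_tendsto_of_tendsto_of_le_of_le' tendsto_const_nhds hlim
    (.of_forall fun _ => zero_le) ?_
  filter_upwards [eventually_ge_atTop 1] with p hp
  have h0 : 0 ≤ 1 / p := by positivity
  rw [ENNReal.mul_rpow_of_nonneg _ _ h0, ENNReal.ofReal_rpow_of_nonneg (hε p) h0]
  gcongr
  calc H ^ (1 / p) ≤ max H 1 ^ (1 / p) := ENNReal.rpow_le_rpow (le_max_left _ _) h0
    _ ≤ max H 1 ^ (1 : ℝ) :=
        ENNReal.rpow_le_rpow_of_exponent_le (le_max_right _ _) ((div_le_one (by linarith)).2 hp)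
    _ = max H 1 := ENNReal.rpow_one _

theorem exists_tendsto_atTop_diag {u : ℕ → ℝ → ℝ≥0∞} (hu : ∀ k, Tendsto (u k) atTop (𝓝 0)) :
    ∃ N : ℝ → ℕ, Tendsto N atTop atTop ∧ Tendsto (fun p => u (N p) p) atTop (𝓝 0) := by
  have hthr : ∀ k, ∃ P : ℝ, ∀ p ≥ P, u k p ≤ ((k : ℝ≥0∞) + 1)⁻¹ := fun k =>
    eventually_atTop.1 <| (hu k).eventually <| eventually_le_nhds <|
      ENNReal.inv_pos.2 (ENNReal.add_ne_top.2 ⟨ENNReal.natCast_ne_top k, one_ne_top⟩)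
  choose P hP using hthr
  let N : ℝ → ℕ := fun p => Nat.findGreatest (fun k => P k ≤ p) ⌈p⌉₊
  have hN : ∀ k p, P k ≤ p → (k : ℝ) ≤ p → k ≤ N p ∧ P (N p) ≤ p := fun k p hPk hk => by
    have hk' : k ≤ ⌈p⌉₊ := Nat.cast_le.1 (hk.trans (Nat.le_ceil p))
    exact ⟨Nat.le_findGreatest hk' hPk, Nat.findGreatest_spec (P := fun k => P k ≤ p) hk' hPk⟩
  have hNtop : Tendsto N atTop atTop := tendsto_atTop.2 fun k =>
    (eventually_ge_atTop (max (P k) k)).mono fun p hp =>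
      (hN k p (le_of_max_le_left hp) (le_of_max_le_right hp)).1
  refine ⟨N, hNtop, ENNReal.tendsto_nhds_zero.2 fun δ hδ => ?_⟩
  obtain ⟨k, hk⟩ := ENNReal.exists_inv_nat_lt hδ.ne'
  filter_upwards [hNtop.eventually_ge_atTop k, eventually_ge_atTop (max (P 0) 0)] with p hkp hp
  calc u (N p) p ≤ ((N p : ℝ≥0∞) + 1)⁻¹ :=
        hP _ _ (hN 0 p (le_of_max_le_left hp) (by simpa using le_of_max_le_right hp)).2
    _ ≤ (k : ℝ≥0∞)⁻¹ := ENNReal.inv_le_inv.2 (by exact_mod_cast hkp.trans (Nat.le_succ _))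
    _ ≤ δ := hk.le

theorem lintegral_ofReal_rpow_rpow_le_essSup {Z : Type*} [MeasurableSpace Z] {γ : Measure Z}
    [IsProbabilityMeasure γ] {c : Z → ℝ} (hc0 : ∀ z, 0 ≤ c z) {p : ℝ} (hp : 0 < p) :
    (∫⁻ z, ENNReal.ofReal (c z ^ p) ∂γ) ^ (1 / p) ≤ essSup (fun z => ENNReal.ofReal (c z)) γ := by
  set E := essSup (fun z => ENNReal.ofReal (c z)) γ
  calc (∫⁻ z, ENNReal.ofReal (c z ^ p) ∂γ) ^ (1 / p) ≤ (∫⁻ _, E ^ p ∂γ) ^ (1 / p) := by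
        gcongr ?_ ^ _
        refine lintegral_mono_ae ?_
        filter_upwards [ENNReal.ae_le_essSup fun z => ENNReal.ofReal (c z)] with z hz
        rw [← ENNReal.ofReal_rpow_of_nonneg (hc0 z) hp.le]
        exact ENNReal.rpow_le_rpow hz hp.le
    _ = E := by
        rw [lintegral_const, measure_univ, mul_one, ← ENNReal.rpow_mul, mul_one_div_cancel hp.ne',
          ENNReal.rpow_one]

theorem Jpe_le_essSup_add {d : ℕ} {c : Rd d × Rd d → ℝ} (hc0 : ∀ z, 0 ≤ c z)
    {μ ν : Measure (Rd d)} {γ : Measure (Rd d × Rd d)} [IsProbabilityMeasure γ]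
    (hγ : IsCoupling γ μ ν) {p : ℝ} (hp : 1 ≤ p) (ε : ℝ) :
    Jpe c μ ν p ε γ ≤ essSup (fun z => ENNReal.ofReal (c z)) γ +
      (ENNReal.ofReal ε * relEntropy γ (μ.prod ν)) ^ (1 / p) := by
  rw [Jpe, if_pos hγ]
  calc _ ≤ (∫⁻ z, ENNReal.ofReal (c z ^ p) ∂γ) ^ (1 / p) +
        (ENNReal.ofReal ε * relEntropy γ (μ.prod ν)) ^ (1 / p) :=
        ENNReal.rpow_add_le_add_rpow _ _ (by positivity) ((div_le_one (by linarith)).2 hp)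
    _ ≤ _ := by gcongr; exact lintegral_ofReal_rpow_rpow_le_essSup hc0 (by linarith)

theorem gamma_limsup_general_general {d : ℕ} (c : Rd d × Rd d → ℝ) (hc : Continuous c)
    (hc0 : ∀ z, 0 ≤ c z)
    (μ ν : Measure (Rd d)) [IsProbabilityMeasure μ]
    (hμ : IsCompact (msupport μ)) (hν : IsCompact (msupport ν))
    (ε : ℝ → ℝ) (hε : ∀ p, 0 < ε p)
    (hε0 : Tendsto (fun p : ℝ => ε p ^ (1 / p)) atTop (nhds 0))
    (γ : Measure (Rd d × Rd d)) (hγP : IsProbabilityMeasure γ) (hγC : IsCoupling γ μ ν) :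
    ∃ γseq : ℝ → Measure (Rd d × Rd d),
      (∀ p, IsProbabilityMeasure (γseq p) ∧ IsCoupling (γseq p) μ ν) ∧
      WeakStarTendsto γseq γ ∧
      Filter.limsup (fun p => Jpe c μ ν p (ε p) (γseq p)) atTop ≤ Jinf c μ ν γ := by
  obtain ⟨γs, hγs, hweak, hcost⟩ := exists_couplings_relEntropy_ne_top_tendsto hμ hν
    (ae_mem_msupport μ) (ae_mem_msupport ν) hγC
  obtain ⟨N, hN, hentropy⟩ := exists_tendsto_atTop_diag fun k =>
    tendsto_ofReal_mul_rpow_one_div (fun p => (hε p).le) hε0 (hγs k).2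
  have hγsP := fun k => (hγs k).1.isProbabilityMeasure
  refine ⟨fun p => γs (N p), fun p => ⟨hγsP _, (hγs _).1⟩, fun f => (hweak f).comp hN, ?_⟩
  rw [Jinf, if_pos hγC]
  refine ENNReal.le_of_forall_pos_le_add fun τ hτ _ => limsup_le_of_le (by isBoundedDefault) ?_
  have hτ2 : 0 < (τ : ℝ) / 2 := by positivity
  filter_upwards [hN.eventually (hcost c hc _ hτ2),
    hentropy.eventually (eventually_le_nhds (ENNReal.ofReal_pos.2 hτ2)),
    eventually_ge_atTop 1] with p hpcost hpentropy hp
  calc Jpe c μ ν p (ε p) (γs (N p)) ≤ _ := Jpe_le_essSup_add hc0 (hγs _).1 hp (ε p)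
    _ ≤ _ := add_le_add hpcost hpentropy
    _ = _ := by
      rw [add_assoc, ← ENNReal.ofReal_add hτ2.le hτ2.le, add_halves, ENNReal.ofReal_coe_nnreal]

/-- (Γ-limsup inequality, general case) If ε_p^{1/p} → 0 as p → ∞, then for every γ ∈ Π(μ,ν)
    there is a recovery family γ_p ∈ Π(μ,ν) converging weakly-star to γ with
    limsup_{p→∞} J_{p,ε_p}(γ_p) ≤ J_∞(γ). -/
theorem gamma_limsup_general {d : ℕ} (c : Rd d × Rd d → ℝ) (hc : Continuous c)
    (hc0 : ∀ z, 0 ≤ c z)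
    (μ ν : Measure (Rd d)) [IsProbabilityMeasure μ] [IsProbabilityMeasure ν]
    (hμ : IsCompact (msupport μ)) (hν : IsCompact (msupport ν))
    (ε : ℝ → ℝ) (hε : ∀ p, 0 < ε p)
    (hε0 : Tendsto (fun p : ℝ => ε p ^ (1 / p)) atTop (nhds 0))
    (γ : Measure (Rd d × Rd d)) (hγP : IsProbabilityMeasure γ) (hγC : IsCoupling γ μ ν) :
    ∃ γseq : ℝ → Measure (Rd d × Rd d),
      (∀ p, IsProbabilityMeasure (γseq p) ∧ IsCoupling (γseq p) μ ν) ∧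
      WeakStarTendsto γseq γ ∧
      Filter.limsup (fun p => Jpe c μ ν p (ε p) (γseq p)) atTop ≤ Jinf c μ ν γ :=
  gamma_limsup_general_general c hc hc0 μ ν hμ hν ε hε hε0 γ hγP hγC
end
end

section
/- Let ε > 0 and let γ_ε ∈ Π(μ,ν) be (c,ε)-cyclically invariant. Fix an integer k ≥ 2 and δ ≥ 0, and let A_{k,c}(δ) := { (x_i,y_i)_{i=1}^k ∈ (ℝ^d×ℝ^d)^k : ∑_{i=1}^k c(x_i,y_i) − ∑_{i=1}^k c(x_i,y_{i+1}) ≥ δ } with y_{k+1} := y_1. Then for every Borel set A ⊂ A_{k,c}(δ), the k-fold product measure γ_ε^k := γ_ε ⊗ ⋯ ⊗ γ_ε satisfies γ_ε^k(A) ≤ e^{−δ/ε}. -/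
open MeasureTheory ENNReal Filter
open scoped Classical

noncomputable section

/-- γ ∈ Π(μ,ν) is (c,ε)-cyclically invariant: γ ≪ μ⊗ν and its density has an everywhere
    positive representative ρ satisfying the cyclical invariance identity
    ∏ᵢ ρ(xᵢ,yᵢ) = exp(−(1/ε)·∑ᵢ(c(xᵢ,yᵢ)−c(xᵢ,y_{i+1})))·∏ᵢ ρ(xᵢ,y_{i+1}). -/
def CyclInvariant {d : ℕ} (c : Rd d × Rd d → ℝ) (ε : ℝ) (μ ν : Measure (Rd d))
    (γ : Measure (Rd d × Rd d)) : Prop :=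
  γ ≪ μ.prod ν ∧
    ∃ ρ : Rd d × Rd d → ℝ, Measurable ρ ∧ (∀ z, 0 < ρ z) ∧
      γ = (μ.prod ν).withDensity (fun z => ENNReal.ofReal (ρ z)) ∧
      ∀ (k : ℕ) (x y : Fin (k + 1) → Rd d),
        ∏ i, ρ (x i, y i) =
          Real.exp (-(1 / ε) * ∑ i, (c (x i, y i) - c (x i, y (i + 1)))) *
            ∏ i, ρ (x i, y (i + 1))


theorem lintegral_pi_prod_aux {E : Type*} [MeasurableSpace E] :
    ∀ (n : ℕ) (μ : Measure E) [SigmaFinite μ] (g : Fin n → E → ℝ≥0∞),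
      (∀ i, Measurable (g i)) →
      ∫⁻ f, ∏ i, g i (f i) ∂(Measure.pi fun _ : Fin n => μ) = ∏ i, ∫⁻ x, g i x ∂μ := by
  intro n
  induction n with
  | zero =>
    intro μ _ g hg
    simp [Measure.pi_of_empty]
  | succ n ih =>
    intro μ _ g hg
    have hF : Measurable fun f : Fin (n + 1) → E => ∏ i, g i (f i) :=
      Finset.measurable_prod _ fun i _ => (hg i).comp (measurable_pi_apply i)
    have hmp := measurePreserving_piFinSuccAbove (fun _ : Fin (n + 1) => μ) 0
    rw [← (hmp.symm _).lintegral_comp hF]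
    have key : ∀ p : E × (Fin n → E),
        (∏ i, g i (((MeasurableEquiv.piFinSuccAbove (fun _ : Fin (n + 1) => E) 0)).symm p i))
          = g 0 p.1 * ∏ j : Fin n, g j.succ (p.2 j) := by
      rintro ⟨x, h⟩
      rw [Fin.prod_univ_succ]
      have h0 : ((MeasurableEquiv.piFinSuccAbove (fun _ : Fin (n + 1) => E) 0)).symm (x, h) 0 = x := by
        simp [MeasurableEquiv.piFinSuccAbove_symm_apply]
      have hsucc : ∀ j : Fin n,
          ((MeasurableEquiv.piFinSuccAbove (fun _ : Fin (n + 1) => E) 0)).symm (x, h) j.succ = h j := by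
        intro j
        simp [MeasurableEquiv.piFinSuccAbove_symm_apply, Fin.succAbove_zero]
      rw [h0]
      exact congrArg _ (Finset.prod_congr rfl fun j _ => by rw [hsucc j])
    simp_rw [key]
    have hGm : Measurable (fun h : Fin n → E => ∏ j, g j.succ (h j)) :=
      Finset.measurable_prod _ fun j _ => (hg j.succ).comp (measurable_pi_apply j)
    rw [lintegral_prod_mul (f := g 0) (g := fun h : Fin n → E => ∏ j, g j.succ (h j))
      (hg 0).aemeasurable hGm.aemeasurable]
    rw [ih μ (fun j => g j.succ) (fun j => hg j.succ), Fin.prod_univ_succ]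

theorem pi_withDensity_aux {E : Type*} [MeasurableSpace E] (n : ℕ) (m : Measure E)
    [SigmaFinite m] (g : E → ℝ≥0∞) (hg : Measurable g) [SigmaFinite (m.withDensity g)] :
    Measure.pi (fun _ : Fin n => m.withDensity g) =
      (Measure.pi fun _ : Fin n => m).withDensity fun f => ∏ i, g (f i) := by
  refine Measure.pi_eq fun s hs => ?_
  rw [withDensity_apply _ (MeasurableSet.univ_pi hs), ← lintegral_indicator (MeasurableSet.univ_pi hs)]
  have hind : ∀ f : Fin n → E, (Set.univ.pi s).indicator (fun f => ∏ i, g (f i)) f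
      = ∏ i, (s i).indicator g (f i) := by
    intro f
    by_cases h : f ∈ Set.univ.pi s
    · rw [Set.indicator_of_mem h]
      exact Finset.prod_congr rfl fun i _ =>
        (Set.indicator_of_mem (h i (Set.mem_univ i)) g).symm
    · rw [Set.indicator_of_notMem h]
      rw [Set.mem_univ_pi] at h
      push_neg at h
      obtain ⟨i, hi⟩ := h
      exact (Finset.prod_eq_zero (Finset.mem_univ i) (Set.indicator_of_notMem hi g)).symm
  simp_rw [hind]
  rw [lintegral_pi_prod_aux n m (fun i => (s i).indicator g) (fun i => hg.indicator (hs i))]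
  exact Finset.prod_congr rfl fun i _ => by
    rw [withDensity_apply _ (hs i), ← lintegral_indicator (hs i)]

theorem shift_measurePreserving {E F : Type*} [MeasurableSpace E] [MeasurableSpace F]
    (n : ℕ) (μ : Measure E) (ν : Measure F) [SigmaFinite μ] [SigmaFinite ν] :
    MeasurePreserving (fun (f : Fin (n + 1) → E × F) (i : Fin (n + 1)) => ((f i).1, (f (i + 1)).2))
      (Measure.pi fun _ => μ.prod ν) (Measure.pi fun _ => μ.prod ν) := by
  set σ : Fin (n + 1) ≃ Fin (n + 1) := (Equiv.addRight (1 : Fin (n + 1))).symm with hσdef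
  have he := measurePreserving_arrowProdEquivProdArrow E F (Fin (n + 1)) (fun _ => μ) (fun _ => ν)
  have hsh := measurePreserving_piCongrLeft (fun _ : Fin (n + 1) => ν) σ
  have hΦ := (MeasurePreserving.id (Measure.pi fun _ : Fin (n + 1) => μ)).prod hsh
  have hcomp := (he.symm _).comp (hΦ.comp he)
  have hfun : (⇑(MeasurableEquiv.arrowProdEquivProdArrow E F (Fin (n + 1))).symm ∘
      Prod.map id (⇑(MeasurableEquiv.piCongrLeft (fun _ : Fin (n + 1) => F) σ)) ∘
      ⇑(MeasurableEquiv.arrowProdEquivProdArrow E F (Fin (n + 1))))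
      = fun (f : Fin (n + 1) → E × F) (i : Fin (n + 1)) => ((f i).1, (f (i + 1)).2) := by
    funext f
    funext i
    have happ : ∀ (Y : Fin (n + 1) → F) (j : Fin (n + 1)),
        MeasurableEquiv.piCongrLeft (fun _ : Fin (n + 1) => F) σ Y j = Y (σ.symm j) := by
      intro Y j
      conv_lhs => rw [show j = σ (σ.symm j) by simp]
      rw [MeasurableEquiv.piCongrLeft_apply_apply]
    simp only [Function.comp_apply, MeasurableEquiv.arrowProdEquivProdArrow,
      Equiv.arrowProdEquivProdArrow, MeasurableEquiv.coe_mk, Equiv.coe_fn_mk,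
      MeasurableEquiv.symm_mk, Equiv.coe_fn_symm_mk, Prod.map]
    rw [happ]
    simp [hσdef]
  rwa [hfun] at hcomp

/-- (Lemma 3.1 of Bernton–Ghosal–Nutz) If γ_ε is (c,ε)-cyclically invariant then, for any
    number of points k + 2 ≥ 2 and any Borel A ⊆ A_{k+2,c}(δ), one has γ_ε^{⊗(k+2)}(A) ≤ e^{−δ/ε}. -/
theorem cyclInvariant_product_bound {d : ℕ} (c : Rd d × Rd d → ℝ) (hcm : Measurable c)
    (hc : ∀ z, 0 < c z)
    (μ ν : Measure (Rd d)) [IsProbabilityMeasure μ] [IsProbabilityMeasure ν]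
    (ε : ℝ) (hε : 0 < ε)
    (γ : Measure (Rd d × Rd d)) [IsProbabilityMeasure γ] (hγC : IsCoupling γ μ ν)
    (hinv : CyclInvariant c ε μ ν γ)
    (k : ℕ) (δ : ℝ) (hδ : 0 ≤ δ)
    (A : Set (Fin (k + 2) → Rd d × Rd d)) (hA : MeasurableSet A)
    (hAsub : A ⊆ {f : Fin (k + 2) → Rd d × Rd d |
      δ ≤ ∑ i, c (f i) - ∑ i, c ((f i).1, (f (i + 1)).2)}) :
    Measure.pi (fun _ : Fin (k + 2) => γ) A ≤ ENNReal.ofReal (Real.exp (-δ / ε)) := by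
  obtain ⟨hac, ρ, hρm, hρpos, hγeq, hcyc⟩ := hinv
  set g : Rd d × Rd d → ℝ≥0∞ := fun z => ENNReal.ofReal (ρ z) with hgdef
  have hgm : Measurable g := hρm.ennreal_ofReal
  haveI hσfin : SigmaFinite ((μ.prod ν).withDensity g) := by
    rw [← hγeq]; infer_instance
  set P : Measure (Fin (k + 2) → Rd d × Rd d) := Measure.pi fun _ : Fin (k + 2) => μ.prod ν
    with hPdef
  set G : (Fin (k + 2) → Rd d × Rd d) → ℝ≥0∞ := fun f => ∏ i, g (f i) with hGdef
  have hGm : Measurable G := Finset.measurable_prod _ fun i _ => hgm.comp (measurable_pi_apply i)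
  have hpi : Measure.pi (fun _ : Fin (k + 2) => γ) = P.withDensity G := by
    conv_lhs => rw [hγeq]
    exact pi_withDensity_aux (k + 2) (μ.prod ν) g hgm
  set T : (Fin (k + 2) → Rd d × Rd d) → Fin (k + 2) → Rd d × Rd d :=
    fun f i => ((f i).1, (f (i + 1)).2) with hTdef
  have hT : MeasurePreserving T P P := shift_measurePreserving (k + 1) μ ν
  -- the total integral of G is 1
  have hone : ∫⁻ z, g z ∂(μ.prod ν) = 1 := by
    rw [← setLIntegral_univ, ← withDensity_apply _ MeasurableSet.univ, ← hγeq]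
    exact measure_univ
  have hint : ∫⁻ f, G f ∂P = 1 := by
    rw [hGdef, hPdef, lintegral_pi_prod_aux (k + 2) (μ.prod ν) (fun _ => g) (fun _ => hgm)]
    simp [hone]
  -- pointwise bound on A
  have hpoint : ∀ f ∈ A, G f ≤ ENNReal.ofReal (Real.exp (-δ / ε)) * G (T f) := by
    intro f hf
    have hx := hcyc (k + 1) (fun i => (f i).1) (fun i => (f i).2)
    simp only [Prod.mk.eta] at hx
    set S : ℝ := ∑ i : Fin (k + 2), (c (f i) - c ((f i).1, (f (i + 1)).2)) with hSdef
    have hSδ : δ ≤ S := by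
      have := hAsub hf
      simp only [Set.mem_setOf_eq] at this
      rw [hSdef, Finset.sum_sub_distrib]
      exact this
    have hexp : Real.exp (-(1 / ε) * S) ≤ Real.exp (-δ / ε) := by
      apply Real.exp_le_exp.mpr
      have h1 : δ / ε ≤ S / ε := (div_le_div_iff_of_pos_right hε).mpr hSδ
      have h2 : -(1 / ε) * S = -(S / ε) := by ring
      rw [h2, neg_div]
      linarith
    have hGf : G f = ENNReal.ofReal (∏ i : Fin (k + 2), ρ (f i)) := by
      rw [ENNReal.ofReal_prod_of_nonneg fun i _ => (hρpos (f i)).le]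
    have hGTf : G (T f) = ENNReal.ofReal (∏ i : Fin (k + 2), ρ ((f i).1, (f (i + 1)).2)) := by
      rw [ENNReal.ofReal_prod_of_nonneg fun i _ => (hρpos _).le]
    rw [hGf, hGTf, hx]
    rw [ENNReal.ofReal_mul (Real.exp_nonneg _)]
    exact mul_le_mul_left (ENNReal.ofReal_le_ofReal hexp) _
  calc Measure.pi (fun _ : Fin (k + 2) => γ) A
      = ∫⁻ f in A, G f ∂P := by rw [hpi, withDensity_apply _ hA]
    _ ≤ ∫⁻ f in A, ENNReal.ofReal (Real.exp (-δ / ε)) * G (T f) ∂P := by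
        refine setLIntegral_mono (measurable_const.mul (hGm.comp hT.measurable)) hpoint
    _ ≤ ∫⁻ f, ENNReal.ofReal (Real.exp (-δ / ε)) * G (T f) ∂P :=
        setLIntegral_le_lintegral _ _
    _ = ENNReal.ofReal (Real.exp (-δ / ε)) * ∫⁻ f, G (T f) ∂P :=
        lintegral_const_mul _ (hGm.comp hT.measurable)
    _ = ENNReal.ofReal (Real.exp (-δ / ε)) * ∫⁻ f, G f ∂P := by
        rw [hT.lintegral_comp hGm]
    _ = ENNReal.ofReal (Real.exp (-δ / ε)) := by rw [hint, mul_one]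
end
end

section
/- (Uniform mass bound on the optimal facet, discrete case) Let μ, ν be discrete probability measures as above, c_{ij} := c(x_i,y_j) ≥ 0, and let v_∞ := min_{γ∈Π(μ,ν)} J_∞(γ). Define F_∞ := {γ ∈ Π(μ,ν) : J_∞(γ) = v_∞}, and for γ ∈ F_∞ set m(γ) := max{γ^{ij} : γ^{ij} > 0 and c_{ij} = v_∞}. Then there exists θ > 0 such that m(γ) ≥ θ for every γ ∈ F_∞. -/
open scoped BigOperators

noncomputable section

/-- Discrete transport plans: N×M matrices with nonnegative entries, row sums μ and
    column sums ν. -/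
def discreteCouplings {N M : ℕ} (μ : Fin N → ℝ) (ν : Fin M → ℝ) :
    Set (Fin N → Fin M → ℝ) :=
  {γ | (∀ i j, 0 ≤ γ i j) ∧ (∀ i, ∑ j, γ i j = μ i) ∧ (∀ j, ∑ i, γ i j = ν j)}

/-- J_∞(γ) = max{c_ij : γ^{ij} > 0} (as a supremum of the corresponding set of reals). -/
def JinfD {N M : ℕ} (c : Fin N → Fin M → ℝ) (γ : Fin N → Fin M → ℝ) : ℝ :=
  sSup {r | ∃ i j, 0 < γ i j ∧ c i j = r}

/-- v_∞ = min_{γ ∈ Π(μ,ν)} J_∞(γ) in the discrete setting. -/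
def vInfD {N M : ℕ} (c : Fin N → Fin M → ℝ) (μ : Fin N → ℝ) (ν : Fin M → ℝ) : ℝ :=
  sInf {r | ∃ γ ∈ discreteCouplings μ ν, JinfD c γ = r}

/-- (Uniform mass bound on the optimal facet) There is θ > 0 such that every optimal plan
    γ ∈ F_∞ carries mass at least θ on some entry (i,j) with γ^{ij} > 0 and c_ij = v_∞. -/
theorem optimal_facet_mass_bound {d N M : ℕ}
    (x : Fin N → EuclideanSpace ℝ (Fin d)) (y : Fin M → EuclideanSpace ℝ (Fin d))
    (μ : Fin N → ℝ) (ν : Fin M → ℝ)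
    (hμ : ∀ i, 0 < μ i) (hν : ∀ j, 0 < ν j)
    (hμ1 : ∑ i, μ i = 1) (hν1 : ∑ j, ν j = 1)
    (c : EuclideanSpace ℝ (Fin d) × EuclideanSpace ℝ (Fin d) → ℝ)
    (hc : Continuous c) (hc0 : ∀ z, 0 ≤ c z) :
    ∃ θ > (0 : ℝ), ∀ γ ∈ discreteCouplings μ ν,
      JinfD (fun i j => c (x i, y j)) γ = vInfD (fun i j => c (x i, y j)) μ ν →
        θ ≤ sSup {r | ∃ i j, γ i j = r ∧ 0 < γ i j ∧
              c (x i, y j) = vInfD (fun i j => c (x i, y j)) μ ν} := by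
  classical
  set c' : Fin N → Fin M → ℝ := fun i j => c (x i, y j) with hc'def
  set v : ℝ := vInfD c' μ ν with hvdef
  have hc'0 : ∀ i j, 0 ≤ c' i j := fun i j => hc0 _
  have hN : 0 < N := by
    rcases Nat.eq_zero_or_pos N with h | h
    · subst h; simp at hμ1
    · exact h
  have hM : 0 < M := by
    rcases Nat.eq_zero_or_pos M with h | h
    · subst h; simp at hν1
    · exact h
  -- the product coupling
  have hγ0 : (fun i j => μ i * ν j) ∈ discreteCouplings μ ν := by
    refine ⟨fun i j => mul_nonneg (hμ i).le (hν j).le, ?_, ?_⟩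
    · intro i; rw [← Finset.mul_sum, hν1, mul_one]
    · intro j; rw [← Finset.sum_mul, hμ1, one_mul]
  -- total mass of a coupling is 1
  have htotal : ∀ γ ∈ discreteCouplings μ ν, ∑ p : Fin N × Fin M, γ p.1 p.2 = 1 := by
    intro γ hγ
    rw [Fintype.sum_prod_type]
    simp only [hγ.2.1]
    exact hμ1
  -- the set of costs on the support is finite
  have hSfin : ∀ γ : Fin N → Fin M → ℝ, ({r | ∃ i j, 0 < γ i j ∧ c' i j = r}).Finite := by
    intro γ
    apply Set.Finite.subset (Set.finite_range (fun p : Fin N × Fin M => c' p.1 p.2))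
    rintro r ⟨i, j, _, hr⟩
    exact ⟨(i, j), hr⟩
  -- every coupling has a positive entry
  have hpos : ∀ γ ∈ discreteCouplings μ ν, ∃ i j, 0 < γ i j := by
    intro γ hγ
    by_contra h
    push_neg at h
    have hz : ∀ p : Fin N × Fin M, γ p.1 p.2 = 0 :=
      fun p => le_antisymm (h p.1 p.2) (hγ.1 p.1 p.2)
    have := htotal γ hγ
    rw [Finset.sum_eq_zero (fun p _ => hz p)] at this
    norm_num at this
  have hSne : ∀ γ ∈ discreteCouplings μ ν,
      ({r | ∃ i j, 0 < γ i j ∧ c' i j = r}).Nonempty := by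
    intro γ hγ
    obtain ⟨i, j, hij⟩ := hpos γ hγ
    exact ⟨c' i j, i, j, hij, rfl⟩
  -- v is a lower bound
  have hbddv : BddBelow {r | ∃ γ ∈ discreteCouplings μ ν, JinfD c' γ = r} := by
    refine ⟨0, ?_⟩
    rintro r ⟨γ, hγ, rfl⟩
    obtain ⟨i, j, hij⟩ := hpos γ hγ
    exact le_trans (hc'0 i j) (le_csSup ((hSfin γ).bddAbove) ⟨i, j, hij, rfl⟩)
  have hvle : ∀ γ ∈ discreteCouplings μ ν, v ≤ JinfD c' γ := by
    intro γ hγ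
    exact csInf_le hbddv ⟨γ, hγ, rfl⟩
  -- support cost bound for optimal plans
  have hsupp_le : ∀ γ : Fin N → Fin M → ℝ, JinfD c' γ = v →
      ∀ i j, 0 < γ i j → c' i j ≤ v := by
    intro γ hopt i j hij
    rw [← hopt]
    exact le_csSup ((hSfin γ).bddAbove) ⟨i, j, hij, rfl⟩
  -- the set of couplings is compact
  have hKclosed : IsClosed (discreteCouplings μ ν) := by
    have heq : discreteCouplings μ ν =
        (⋂ i, ⋂ j, {γ : Fin N → Fin M → ℝ | 0 ≤ γ i j}) ∩
        ((⋂ i, {γ : Fin N → Fin M → ℝ | ∑ j, γ i j = μ i}) ∩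
         (⋂ j, {γ : Fin N → Fin M → ℝ | ∑ i, γ i j = ν j})) := by
      ext γ
      constructor
      · rintro ⟨h1, h2, h3⟩
        exact ⟨Set.mem_iInter.2 fun i => Set.mem_iInter.2 fun j => h1 i j,
          Set.mem_iInter.2 h2, Set.mem_iInter.2 h3⟩
      · rintro ⟨h1, h2, h3⟩
        exact ⟨fun i j => Set.mem_iInter.1 (Set.mem_iInter.1 h1 i) j,
          fun i => Set.mem_iInter.1 h2 i, fun j => Set.mem_iInter.1 h3 j⟩
    rw [heq]
    refine IsClosed.inter ?_ (IsClosed.inter ?_ ?_)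
    · exact isClosed_iInter fun i => isClosed_iInter fun j =>
        isClosed_le continuous_const ((continuous_apply j).comp (continuous_apply i))
    · exact isClosed_iInter fun i => isClosed_eq
        (continuous_finset_sum _ fun j _ => (continuous_apply j).comp (continuous_apply i))
        continuous_const
    · exact isClosed_iInter fun j => isClosed_eq
        (continuous_finset_sum _ fun i _ => (continuous_apply j).comp (continuous_apply i))
        continuous_const
  have hentry_le : ∀ γ ∈ discreteCouplings μ ν, ∀ i j, γ i j ≤ 1 := by
    intro γ hγ i j
    calc γ i j ≤ ∑ j, γ i j :=
          Finset.single_le_sum (fun k _ => hγ.1 i k) (Finset.mem_univ j)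
      _ = μ i := hγ.2.1 i
      _ ≤ ∑ i, μ i := Finset.single_le_sum (fun k _ => (hμ k).le) (Finset.mem_univ i)
      _ = 1 := hμ1
  have hKbdd : Bornology.IsBounded (discreteCouplings μ ν) := by
    apply Bornology.IsBounded.subset
      (Metric.isBounded_closedBall (x := (0 : Fin N → Fin M → ℝ)) (r := 1))
    intro γ hγ
    rw [Metric.mem_closedBall, dist_zero_right]
    rw [pi_norm_le_iff_of_nonneg zero_le_one]
    intro i
    rw [pi_norm_le_iff_of_nonneg zero_le_one]
    intro j
    rw [Real.norm_eq_abs, abs_le]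
    exact ⟨le_trans (by norm_num) (hγ.1 i j), hentry_le γ hγ i j⟩
  have hKcompact : IsCompact (discreteCouplings μ ν) :=
    Metric.isCompact_of_isClosed_isBounded hKclosed hKbdd
  -- maximize the mass on the strictly-cheaper set A
  set A : Finset (Fin N × Fin M) :=
    Finset.univ.filter (fun p : Fin N × Fin M => c' p.1 p.2 < v) with hAdef
  have hfcont : Continuous (fun γ : Fin N → Fin M → ℝ => ∑ p ∈ A, γ p.1 p.2) :=
    continuous_finset_sum _ fun p _ => (continuous_apply p.2).comp (continuous_apply p.1)
  obtain ⟨γs, hγs, hmax⟩ := hKcompact.exists_isMaxOn ⟨_, hγ0⟩ hfcont.continuousOn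
  set t : ℝ := ∑ p ∈ A, γs p.1 p.2 with htdef
  have hsplit : ∀ γ ∈ discreteCouplings μ ν,
      (∑ p ∈ A, γ p.1 p.2) + ∑ p ∈ Aᶜ, γ p.1 p.2 = 1 := by
    intro γ hγ
    rw [Finset.sum_add_sum_compl]
    exact htotal γ hγ
  -- the maximizer cannot put all its mass on A
  have hout : ∃ p : Fin N × Fin M, 0 < γs p.1 p.2 ∧ ¬ c' p.1 p.2 < v := by
    by_contra h
    push_neg at h
    have hmem : sSup {r | ∃ i j, 0 < γs i j ∧ c' i j = r} ∈
        {r | ∃ i j, 0 < γs i j ∧ c' i j = r} :=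
      (hSne γs hγs).csSup_mem (hSfin γs)
    obtain ⟨i, j, hij, hcij⟩ := hmem
    have hlt : JinfD c' γs < v := by
      have : JinfD c' γs = c' i j := hcij.symm
      rw [this]
      exact h (i, j) hij
    exact absurd (hvle γs hγs) (not_le.2 hlt)
  have htlt : t < 1 := by
    obtain ⟨p, hp, hpc⟩ := hout
    have h1 := hsplit γs hγs
    have hpA : p ∈ Aᶜ := by simp only [hAdef, Finset.mem_compl, Finset.mem_filter, Finset.mem_univ, true_and]; exact hpc
    have h2 : γs p.1 p.2 ≤ ∑ q ∈ Aᶜ, γs q.1 q.2 :=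
      Finset.single_le_sum (fun q _ => hγs.1 q.1 q.2) hpA
    linarith
  -- conclusion
  refine ⟨(1 - t) / ((N : ℝ) * M), div_pos (by linarith) (by positivity), ?_⟩
  intro γ hγ hopt
  set T : Set ℝ := {r | ∃ i j, γ i j = r ∧ 0 < γ i j ∧ c' i j = v} with hTdef
  have hTfin : T.Finite := by
    apply Set.Finite.subset (Set.finite_range (fun p : Fin N × Fin M => γ p.1 p.2))
    rintro r ⟨i, j, hr, _⟩
    exact ⟨(i, j), hr⟩
  have hmass : 1 - t ≤ ∑ p ∈ Aᶜ, γ p.1 p.2 := by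
    have h1 := hsplit γ hγ
    have h2 : (∑ p ∈ A, γ p.1 p.2) ≤ t := hmax hγ
    linarith
  have hex : ∃ p ∈ Aᶜ, 0 < γ p.1 p.2 := by
    by_contra h
    push_neg at h
    have hz : ∑ p ∈ Aᶜ, γ p.1 p.2 = 0 :=
      Finset.sum_eq_zero (fun p hp => le_antisymm (h p hp) (hγ.1 p.1 p.2))
    rw [hz] at hmass
    linarith
  obtain ⟨p, hpA, hp⟩ := hex
  have hcv : ∀ q ∈ Aᶜ, 0 < γ q.1 q.2 → c' q.1 q.2 = v := by
    intro q hq hqpos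
    have h1 : ¬ c' q.1 q.2 < v := by
      intro hlt
      have : q ∈ A := by simp [hAdef, hlt]
      exact (Finset.mem_compl.1 hq) this
    exact le_antisymm (hsupp_le γ hopt q.1 q.2 hqpos) (not_lt.1 h1)
  have hsup0 : 0 < sSup T :=
    lt_of_lt_of_le hp (le_csSup hTfin.bddAbove ⟨p.1, p.2, rfl, hp, hcv p hpA hp⟩)
  have hterm : ∀ q ∈ Aᶜ, γ q.1 q.2 ≤ sSup T := by
    intro q hq
    rcases eq_or_lt_of_le (hγ.1 q.1 q.2) with h | h
    · rw [← h]; exact hsup0.le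
    · exact le_csSup hTfin.bddAbove ⟨q.1, q.2, rfl, h, hcv q hq h⟩
  have hcard : ((Aᶜ : Finset (Fin N × Fin M)).card : ℝ) ≤ (N : ℝ) * M := by
    have h1 : (Aᶜ : Finset (Fin N × Fin M)).card ≤ N * M := by
      calc (Aᶜ : Finset (Fin N × Fin M)).card ≤ Fintype.card (Fin N × Fin M) :=
            Finset.card_le_univ _
        _ = N * M := by simp [Fintype.card_prod]
    exact_mod_cast h1
  have hsum_le : ∑ q ∈ Aᶜ, γ q.1 q.2 ≤ (N : ℝ) * M * sSup T := by
    calc ∑ q ∈ Aᶜ, γ q.1 q.2 ≤ (Aᶜ : Finset (Fin N × Fin M)).card • sSup T :=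
          Finset.sum_le_card_nsmul _ _ _ hterm
      _ = ((Aᶜ : Finset (Fin N × Fin M)).card : ℝ) * sSup T := nsmul_eq_mul _ _
      _ ≤ (N : ℝ) * M * sSup T := mul_le_mul_of_nonneg_right hcard hsup0.le
  rw [div_le_iff₀ (by positivity : (0:ℝ) < (N : ℝ) * M)]
  calc (1 : ℝ) - t ≤ ∑ q ∈ Aᶜ, γ q.1 q.2 := hmass
    _ ≤ (N : ℝ) * M * sSup T := hsum_le
    _ = sSup T * ((N : ℝ) * M) := by ring
end
end

section
/- (Lower bound on the speed of convergence, discrete case) Let μ, ν be discrete probability measures as above and assume v_∞ ≥ 1. Then p·(v_p − v_∞) is bounded from below as p → ∞; consequently v_p − v_∞ = O(1/p). -/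
open scoped BigOperators

noncomputable section

/-- Discrete relative entropy H(γ|μ⊗ν) = ∑_{ij} γ^{ij} log(γ^{ij}/(μ_i ν_j)). -/
def HD {N M : ℕ} (μ : Fin N → ℝ) (ν : Fin M → ℝ) (γ : Fin N → Fin M → ℝ) : ℝ :=
  ∑ i, ∑ j, γ i j * Real.log (γ i j / (μ i * ν j))

/-- J_p(γ) = (∑_{ij} γ^{ij} c_{ij}^p + H(γ|μ⊗ν))^{1/p} in the discrete setting. -/
def JpD {N M : ℕ} (c : Fin N → Fin M → ℝ) (μ : Fin N → ℝ) (ν : Fin M → ℝ) (p : ℝ)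
    (γ : Fin N → Fin M → ℝ) : ℝ :=
  (∑ i, ∑ j, γ i j * c i j ^ p + HD μ ν γ) ^ (1 / p)

/-- v_p = min_{γ ∈ Π(μ,ν)} J_p(γ) in the discrete setting. -/
def vpD {N M : ℕ} (c : Fin N → Fin M → ℝ) (μ : Fin N → ℝ) (ν : Fin M → ℝ) (p : ℝ) : ℝ :=
  sInf {r | ∃ γ ∈ discreteCouplings μ ν, JpD c μ ν p γ = r}

theorem speed_aux {N M : ℕ} (cm : Fin N → Fin M → ℝ)
    (μ : Fin N → ℝ) (ν : Fin M → ℝ)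
    (hμ : ∀ i, 0 < μ i) (hν : ∀ j, 0 < ν j)
    (hμ1 : ∑ i, μ i = 1) (hν1 : ∑ j, ν j = 1)
    (hc0 : ∀ i j, 0 ≤ cm i j)
    (hvinf : 1 ≤ vInfD cm μ ν) :
    (∃ A : ℝ, ∃ p₀ : ℝ, 1 ≤ p₀ ∧ ∀ p ≥ p₀,
        A ≤ p * (vpD cm μ ν p - vInfD cm μ ν)) ∧
    (∃ C > (0 : ℝ), ∃ p₀ : ℝ, 1 ≤ p₀ ∧ ∀ p ≥ p₀,
        |vpD cm μ ν p - vInfD cm μ ν| ≤ C / p) := by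
  set D := discreteCouplings μ ν with hD
  set vI := vInfD cm μ ν with hvI
  -- product coupling
  have hprod : (fun i j => μ i * ν j) ∈ D := by
    refine ⟨fun i j => mul_nonneg (hμ i).le (hν j).le, fun i => ?_, fun j => ?_⟩
    · rw [← Finset.mul_sum, hν1, mul_one]
    · rw [← Finset.sum_mul, hμ1, one_mul]
  have hDne : D.Nonempty := ⟨_, hprod⟩
  -- support sets
  set S : (Fin N → Fin M → ℝ) → Set ℝ := fun γ => {r | ∃ i j, 0 < γ i j ∧ cm i j = r} with hS
  have hSfin : ∀ γ, (S γ).Finite := by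
    intro γ
    apply Set.Finite.subset (Set.finite_range (fun q : Fin N × Fin M => cm q.1 q.2))
    rintro r ⟨i, j, _, h⟩
    exact ⟨(i, j), h⟩
  have hSne : ∀ γ ∈ D, (S γ).Nonempty := by
    intro γ hγ
    obtain ⟨i, _, hi⟩ := Finset.exists_ne_zero_of_sum_ne_zero (by rw [hμ1]; norm_num :
      ∑ i, μ i ≠ 0)
    have : ∑ j, γ i j ≠ 0 := by rw [hγ.2.1 i]; exact hi
    obtain ⟨j, _, hj⟩ := Finset.exists_ne_zero_of_sum_ne_zero this
    exact ⟨cm i j, i, j, lt_of_le_of_ne (hγ.1 i j) (Ne.symm hj), rfl⟩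
  have hJinf_mem : ∀ γ ∈ D, JinfD cm γ ∈ S γ := fun γ hγ =>
    (hSne γ hγ).csSup_mem (hSfin γ)
  have hJinf_ub : ∀ γ, ∀ r ∈ S γ, r ≤ JinfD cm γ := fun γ r hr =>
    le_csSup (hSfin γ).bddAbove hr
  -- the vInf value set
  set V : Set ℝ := {r | ∃ γ ∈ D, JinfD cm γ = r} with hV
  have hVfin : V.Finite := by
    apply Set.Finite.subset (Set.finite_range (fun q : Fin N × Fin M => cm q.1 q.2))
    rintro r ⟨γ, hγ, rfl⟩
    obtain ⟨i, j, _, h⟩ := hJinf_mem γ hγ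
    exact ⟨(i, j), h⟩
  have hVne : V.Nonempty := ⟨_, _, hprod, rfl⟩
  have hvI_mem : vI ∈ V := hVne.csInf_mem hVfin
  have hvI_le : ∀ γ ∈ D, vI ≤ JinfD cm γ := fun γ hγ =>
    csInf_le hVfin.bddBelow ⟨γ, hγ, rfl⟩
  obtain ⟨γs, hγs, hγsJ⟩ := hvI_mem
  have hvIpos : (0:ℝ) < vI := lt_of_lt_of_le one_pos hvinf
  -- compactness
  have hD_closed : IsClosed D := by
    have h1 : IsClosed {γ : Fin N → Fin M → ℝ | ∀ i j, 0 ≤ γ i j} := by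
      simp_rw [Set.setOf_forall]
      exact isClosed_iInter fun i => isClosed_iInter fun j =>
        isClosed_le continuous_const ((continuous_apply j).comp (continuous_apply i))
    have h2 : IsClosed {γ : Fin N → Fin M → ℝ | ∀ i, ∑ j, γ i j = μ i} := by
      simp_rw [Set.setOf_forall]
      exact isClosed_iInter fun i => isClosed_eq
        (continuous_finset_sum _ fun j _ => (continuous_apply j).comp (continuous_apply i))
        continuous_const
    have h3 : IsClosed {γ : Fin N → Fin M → ℝ | ∀ j, ∑ i, γ i j = ν j} := by
      simp_rw [Set.setOf_forall]
      exact isClosed_iInter fun j => isClosed_eq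
        (continuous_finset_sum _ fun i _ => (continuous_apply j).comp (continuous_apply i))
        continuous_const
    have : D = {γ : Fin N → Fin M → ℝ | ∀ i j, 0 ≤ γ i j} ∩
        ({γ | ∀ i, ∑ j, γ i j = μ i} ∩ {γ | ∀ j, ∑ i, γ i j = ν j}) := by
      ext γ; simp [hD, discreteCouplings, Set.mem_setOf_eq, and_assoc]
    rw [this]; exact h1.inter (h2.inter h3)
  have hD_cpt : IsCompact D := by
    refine Metric.isCompact_of_isClosed_isBounded hD_closed ?_
    rw [isBounded_iff_forall_norm_le]
    refine ⟨1, fun γ hγ => ?_⟩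
    rw [pi_norm_le_iff_of_nonneg zero_le_one]
    intro i
    rw [pi_norm_le_iff_of_nonneg zero_le_one]
    intro j
    have h1 : γ i j ≤ μ i := by
      rw [← hγ.2.1 i]
      exact Finset.single_le_sum (fun j' _ => hγ.1 i j') (Finset.mem_univ j)
    have h2 : μ i ≤ 1 := by
      rw [← hμ1]
      exact Finset.single_le_sum (fun i' _ => (hμ i').le) (Finset.mem_univ i)
    rw [Real.norm_eq_abs, abs_le]
    exact ⟨by linarith [hγ.1 i j], by linarith⟩
  -- the high-cost cells and δ
  set T : Finset (Fin N × Fin M) := Finset.univ.filter (fun q => vI ≤ cm q.1 q.2) with hT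
  set m : (Fin N → Fin M → ℝ) → ℝ := fun γ => ∑ q ∈ T, γ q.1 q.2 with hm
  have hm_cont : Continuous m :=
    continuous_finset_sum _ fun q _ => (continuous_apply q.2).comp (continuous_apply q.1)
  obtain ⟨γ0, hγ0, hγ0min'⟩ := hD_cpt.exists_isMinOn hDne hm_cont.continuousOn
  have hγ0min : ∀ γ ∈ D, m γ0 ≤ m γ := fun γ hγ => hγ0min' hγ
  set δ := m γ0 with hδ
  have hδpos : 0 < δ := by
    obtain ⟨i, j, hpos, hcij⟩ := hJinf_mem γ0 hγ0
    have hmemT : (i, j) ∈ T := by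
      rw [hT, Finset.mem_filter]
      exact ⟨Finset.mem_univ _, by rw [hcij]; exact hvI_le γ0 hγ0⟩
    calc (0:ℝ) < γ0 i j := hpos
      _ ≤ δ := Finset.single_le_sum (fun q _ => hγ0.1 q.1 q.2) hmemT
  have hδm : ∀ γ ∈ D, δ ≤ m γ := hγ0min
  -- total mass 1 and H ≥ 0
  have htot : ∀ γ ∈ D, ∑ i, ∑ j, γ i j = 1 := by
    intro γ hγ
    rw [Finset.sum_congr rfl (fun i _ => hγ.2.1 i), hμ1]
  have hHnn : ∀ γ ∈ D, 0 ≤ HD μ ν γ := by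
    intro γ hγ
    have key : ∀ i j, γ i j - μ i * ν j ≤ γ i j * Real.log (γ i j / (μ i * ν j)) := by
      intro i j
      have hy : 0 < μ i * ν j := mul_pos (hμ i) (hν j)
      rcases eq_or_lt_of_le (hγ.1 i j) with h | h
      · rw [← h]; simp; linarith
      · have hlog : Real.log ((μ i * ν j) / γ i j) ≤ (μ i * ν j) / γ i j - 1 :=
          Real.log_le_sub_one_of_pos (div_pos hy h)
        have hinv : Real.log (γ i j / (μ i * ν j)) = - Real.log ((μ i * ν j) / γ i j) := by
          rw [← Real.log_inv]; congr 1; field_simp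
        rw [hinv]
        have := mul_le_mul_of_nonneg_left hlog h.le
        have hne : γ i j ≠ 0 := h.ne'
        calc γ i j - μ i * ν j = γ i j * (1 - (μ i * ν j) / γ i j) := by field_simp
          _ ≤ γ i j * (-Real.log ((μ i * ν j) / γ i j)) := by nlinarith
    have hsum : ∑ i, ∑ j, (γ i j - μ i * ν j) ≤ HD μ ν γ :=
      Finset.sum_le_sum fun i _ => Finset.sum_le_sum fun j _ => key i j
    have : ∑ i, ∑ j, (γ i j - μ i * ν j) = 0 := by
      simp_rw [Finset.sum_sub_distrib]
      rw [htot γ hγ]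
      simp_rw [← Finset.mul_sum, hν1, mul_one]
      rw [hμ1]; ring
    linarith
  -- main quantitative bounds for p ≥ 1
  set Hs := HD μ ν γs with hHs
  have hHsnn : 0 ≤ Hs := hHnn γs hγs
  have key : ∀ p : ℝ, 1 ≤ p →
      vI + vI * Real.log δ / p ≤ vpD cm μ ν p ∧ vpD cm μ ν p ≤ vI + Hs / p := by
    intro p hp
    have hp0 : (0:ℝ) < p := lt_of_lt_of_le one_pos hp
    have hvp_nn : 0 ≤ vI ^ p := Real.rpow_nonneg hvIpos.le p
    -- lower bound on every JpD
    have hlow : ∀ γ ∈ D, vI + vI * Real.log δ / p ≤ JpD cm μ ν p γ := by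
      intro γ hγ
      have hSp : δ * vI ^ p ≤ ∑ i, ∑ j, γ i j * cm i j ^ p := by
        have e1 : ∑ i, ∑ j, γ i j * cm i j ^ p
            = ∑ q ∈ (Finset.univ : Finset (Fin N × Fin M)), γ q.1 q.2 * cm q.1 q.2 ^ p := by
          rw [← Finset.univ_product_univ]
          exact (Finset.sum_product' Finset.univ Finset.univ (fun i j => γ i j * cm i j ^ p)).symm
        have e2 : ∑ q ∈ T, γ q.1 q.2 * vI ^ p ≤ ∑ q ∈ T, γ q.1 q.2 * cm q.1 q.2 ^ p := by
          refine Finset.sum_le_sum fun q hq => ?_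
          have hvc : vI ≤ cm q.1 q.2 := (Finset.mem_filter.mp hq).2
          exact mul_le_mul_of_nonneg_left
            (Real.rpow_le_rpow hvIpos.le hvc hp0.le) (hγ.1 q.1 q.2)
        have e3 : ∑ q ∈ T, γ q.1 q.2 * cm q.1 q.2 ^ p
            ≤ ∑ q ∈ (Finset.univ : Finset (Fin N × Fin M)), γ q.1 q.2 * cm q.1 q.2 ^ p :=
          Finset.sum_le_sum_of_subset_of_nonneg (Finset.subset_univ T)
            (fun q _ _ => mul_nonneg (hγ.1 q.1 q.2) (Real.rpow_nonneg (hc0 q.1 q.2) p))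
        have e4 : ∑ q ∈ T, γ q.1 q.2 * vI ^ p = m γ * vI ^ p := by
          rw [hm, Finset.sum_mul]
        have e5 : δ * vI ^ p ≤ m γ * vI ^ p :=
          mul_le_mul_of_nonneg_right (hδm γ hγ) hvp_nn
        rw [e1]; rw [e4] at e2; linarith
      have hbase : δ * vI ^ p ≤ ∑ i, ∑ j, γ i j * cm i j ^ p + HD μ ν γ := by
        have := hHnn γ hγ; linarith
      have h6 : (δ * vI ^ p) ^ (1/p) ≤ JpD cm μ ν p γ :=
        Real.rpow_le_rpow (mul_nonneg hδpos.le hvp_nn) hbase (by positivity)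
      have h7 : (δ * vI ^ p) ^ (1/p) = δ ^ (1/p) * vI := by
        rw [Real.mul_rpow hδpos.le hvp_nn, ← Real.rpow_mul hvIpos.le,
          mul_one_div_cancel hp0.ne', Real.rpow_one]
      have h8 : 1 + Real.log δ * (1/p) ≤ δ ^ (1/p) := by
        rw [Real.rpow_def_of_pos hδpos]
        linarith [Real.add_one_le_exp (Real.log δ * (1/p))]
      have h9 : (1 + Real.log δ * (1/p)) * vI ≤ δ ^ (1/p) * vI :=
        mul_le_mul_of_nonneg_right h8 hvIpos.le
      have h10 : (1 + Real.log δ * (1/p)) * vI = vI + vI * Real.log δ / p := by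
        field_simp
      rw [← h10]; rw [h7] at h6; linarith
    -- the set of JpD values
    set W : Set ℝ := {r | ∃ γ ∈ D, JpD cm μ ν p γ = r} with hW
    have hWbdd : BddBelow W := by
      refine ⟨vI + vI * Real.log δ / p, ?_⟩
      rintro r ⟨γ, hγ, rfl⟩
      exact hlow γ hγ
    have hWne : W.Nonempty := ⟨_, _, hprod, rfl⟩
    have hlower : vI + vI * Real.log δ / p ≤ vpD cm μ ν p := by
      refine le_csInf hWne ?_
      rintro r ⟨γ, hγ, rfl⟩
      exact hlow γ hγ
    -- upper bound via γs
    have hupper : vpD cm μ ν p ≤ JpD cm μ ν p γs := csInf_le hWbdd ⟨γs, hγs, rfl⟩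
    have hSps : ∑ i, ∑ j, γs i j * cm i j ^ p ≤ vI ^ p := by
      have e1 : ∀ i j, γs i j * cm i j ^ p ≤ γs i j * vI ^ p := by
        intro i j
        rcases eq_or_lt_of_le (hγs.1 i j) with h | h
        · rw [← h]; simp
        · have hc : cm i j ≤ vI := by
            rw [← hγsJ]
            exact hJinf_ub γs _ ⟨i, j, h, rfl⟩
          exact mul_le_mul_of_nonneg_left
            (Real.rpow_le_rpow (hc0 i j) hc hp0.le) h.le
      calc ∑ i, ∑ j, γs i j * cm i j ^ p ≤ ∑ i, ∑ j, γs i j * vI ^ p :=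
            Finset.sum_le_sum fun i _ => Finset.sum_le_sum fun j _ => e1 i j
        _ = (∑ i, ∑ j, γs i j) * vI ^ p := by simp_rw [← Finset.sum_mul]
        _ = vI ^ p := by rw [htot γs hγs, one_mul]
    set t := Hs / (p * vI) with ht
    have htnn : 0 ≤ t := div_nonneg hHsnn (mul_pos hp0 hvIpos).le
    have hbern : 1 + p * t ≤ (1 + t) ^ p :=
      one_add_mul_self_le_rpow_one_add (by linarith) hp
    have he2 : vI * (1 + t) = vI + Hs / p := by
      rw [ht]; field_simp
    have hdiv : vI ^ p / vI = vI ^ (p - 1) := by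
      rw [Real.rpow_sub hvIpos, Real.rpow_one]
    have h1le : (1:ℝ) ≤ vI ^ (p - 1) := Real.one_le_rpow hvinf (by linarith)
    have hpt : vI ^ p * (p * t) = vI ^ (p - 1) * Hs := by
      rw [← hdiv, ht]; field_simp
    have hchain : vI ^ p + Hs ≤ (vI + Hs / p) ^ p := by
      calc vI ^ p + Hs ≤ vI ^ p + vI ^ (p - 1) * Hs := by nlinarith
        _ = vI ^ p * (1 + p * t) := by rw [← hpt]; ring
        _ ≤ vI ^ p * (1 + t) ^ p := mul_le_mul_of_nonneg_left hbern hvp_nn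
        _ = (vI * (1 + t)) ^ p := (Real.mul_rpow hvIpos.le (by linarith)).symm
        _ = (vI + Hs / p) ^ p := by rw [he2]
    have hSnn : 0 ≤ ∑ i, ∑ j, γs i j * cm i j ^ p + Hs := by
      have : 0 ≤ ∑ i, ∑ j, γs i j * cm i j ^ p :=
        Finset.sum_nonneg fun i _ => Finset.sum_nonneg fun j _ =>
          mul_nonneg (hγs.1 i j) (Real.rpow_nonneg (hc0 i j) p)
      linarith
    have hJs : JpD cm μ ν p γs ≤ vI + Hs / p := by
      have hb : ∑ i, ∑ j, γs i j * cm i j ^ p + HD μ ν γs ≤ (vI + Hs / p) ^ p := by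
        rw [← hHs]; linarith
      have h6 : (∑ i, ∑ j, γs i j * cm i j ^ p + HD μ ν γs) ^ (1/p)
          ≤ ((vI + Hs / p) ^ p) ^ (1/p) :=
        Real.rpow_le_rpow hSnn hb (by positivity)
      rw [← Real.rpow_mul (by positivity : (0:ℝ) ≤ vI + Hs / p), mul_one_div_cancel hp0.ne',
        Real.rpow_one] at h6
      have hJeq : JpD cm μ ν p γs
          = (∑ i, ∑ j, γs i j * cm i j ^ p + HD μ ν γs) ^ (1/p) := rfl
      rw [hJeq]; exact h6
    exact ⟨hlower, le_trans hupper hJs⟩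
  constructor
  · refine ⟨vI * Real.log δ, 1, le_refl 1, fun p hp => ?_⟩
    have hp0 : (0:ℝ) < p := lt_of_lt_of_le one_pos hp
    obtain ⟨hl, _⟩ := key p hp
    have h1 : vI * Real.log δ / p ≤ vpD cm μ ν p - vI := by linarith
    calc vI * Real.log δ = p * (vI * Real.log δ / p) := by field_simp
      _ ≤ p * (vpD cm μ ν p - vI) := mul_le_mul_of_nonneg_left h1 hp0.le
  · refine ⟨Hs + |vI * Real.log δ| + 1, by positivity, 1, le_refl 1, fun p hp => ?_⟩
    have hp0 : (0:ℝ) < p := lt_of_lt_of_le one_pos hp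
    obtain ⟨hl, hu⟩ := key p hp
    set C := Hs + |vI * Real.log δ| + 1 with hC
    rw [abs_le]
    constructor
    · have h1 : -C ≤ vI * Real.log δ := by
        have := neg_abs_le (vI * Real.log δ); rw [hC]; linarith
      have h2 : (-C) / p ≤ vI * Real.log δ / p := by
        apply div_le_div_of_nonneg_right h1 hp0.le
      rw [neg_div] at h2
      linarith
    · have h1 : Hs ≤ C := by
        have := abs_nonneg (vI * Real.log δ); rw [hC]; linarith
      have h2 : Hs / p ≤ C / p := div_le_div_of_nonneg_right h1 hp0.le
      linarith

/-- (Lower bound on the speed of convergence, discrete case) If v_∞ ≥ 1, then p·(v_p − v_∞) is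
    bounded from below as p → ∞; consequently v_p − v_∞ = O(1/p). -/
theorem discrete_speed_lower_bound {d N M : ℕ}
    (x : Fin N → EuclideanSpace ℝ (Fin d)) (y : Fin M → EuclideanSpace ℝ (Fin d))
    (μ : Fin N → ℝ) (ν : Fin M → ℝ)
    (hμ : ∀ i, 0 < μ i) (hν : ∀ j, 0 < ν j)
    (hμ1 : ∑ i, μ i = 1) (hν1 : ∑ j, ν j = 1)
    (c : EuclideanSpace ℝ (Fin d) × EuclideanSpace ℝ (Fin d) → ℝ)
    (hc : Continuous c) (hc0 : ∀ z, 0 ≤ c z)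
    (hvinf : 1 ≤ vInfD (fun i j => c (x i, y j)) μ ν) :
    (∃ A : ℝ, ∃ p₀ : ℝ, 1 ≤ p₀ ∧ ∀ p ≥ p₀,
        A ≤ p * (vpD (fun i j => c (x i, y j)) μ ν p - vInfD (fun i j => c (x i, y j)) μ ν)) ∧
    (∃ C > (0 : ℝ), ∃ p₀ : ℝ, 1 ≤ p₀ ∧ ∀ p ≥ p₀,
        |vpD (fun i j => c (x i, y j)) μ ν p - vInfD (fun i j => c (x i, y j)) μ ν| ≤ C / p) := by
  exact speed_aux (fun i j => c (x i, y j)) μ ν hμ hν hμ1 hν1 (fun i j => hc0 (x i, y j)) hvinf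
end
end
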